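/- arXiv:1207.0564 — 2 statements merged into one kernel-verified Lean document; each statement's English description precedes it below -/
import Mathlib

section
/- Let α : Ω → ℝ be continuously differentiable, let u : Ω → ℝ be C^2 and vanish on ∂Ω, and set f = −∂/∂x(α·∂u/∂x) − ∂/∂y(α·∂u/∂y). Then the finite volume bilinear form is variationally exact: for every test function w, a_P(u, w) = Σ_{(i,k;j,l)} w_{i,k;j,l} · ∫_{τ'_{i,k;j,l}} f dx dy, where the sum runs over all 1 ≤ i ≤ m, 1 ≤ k ≤ r, 1 ≤ j ≤ n, 1 ≤ l ≤ r with (i,k) ≠ (m,r) and (j,l) ≠ (n,r), and τ'_{i,k;j,l} = [g^x_{i,k}, g^x_{i,k+1}] × [g^y_{j,l}, g^y_{j,l+1}]. -/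
open Polynomial MeasureTheory

noncomputable section

/-- `Leg r` is the `r`-th (formal) derivative of `(X² − 1)^r`, a nonzero scalar
multiple of the degree-`r` Legendre polynomial. -/
def Leg (r : ℕ) : Polynomial ℝ :=
  (fun p => Polynomial.derivative p)^[r] ((Polynomial.X ^ 2 - 1) ^ r)

/-- `G 1 < … < G r` are the Gauss points: the roots of `Leg r`, all in `(-1,1)`. -/
def IsGaussPoints (r : ℕ) (G : ℕ → ℝ) : Prop :=
  (∀ k, 1 ≤ k → k < r → G k < G (k + 1)) ∧
  ∀ k, 1 ≤ k → k ≤ r → G k ∈ Set.Ioo (-1 : ℝ) 1 ∧ (Leg r).IsRoot (G k)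

/-- `A k = ∫_{-1}^{1} ℓ_k` where `ℓ_k` is the Lagrange basis polynomial of degree
`≤ r - 1` at the Gauss points, i.e. `ℓ_k (G j) = δ_{jk}`. -/
def IsGaussWeights (r : ℕ) (G A : ℕ → ℝ) : Prop :=
  ∀ k, 1 ≤ k → k ≤ r → ∃ ℓ : Polynomial ℝ,
    ℓ.natDegree ≤ r - 1 ∧
    (∀ j, 1 ≤ j → j ≤ r → ℓ.eval (G j) = if j = k then 1 else 0) ∧
    A k = ∫ x in (-1 : ℝ)..1, ℓ.eval x

/-- `Lob 0 = −1 < Lob 1 < … < Lob (r−1) < Lob r = 1` are the Lobatto points: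
`±1` together with the roots of the derivative of `Leg r`. -/
def IsLobattoPoints (r : ℕ) (L : ℕ → ℝ) : Prop :=
  L 0 = -1 ∧ L r = 1 ∧ (∀ k < r, L k < L (k + 1)) ∧
  ∀ k, 1 ≤ k → k + 1 ≤ r → L k ∈ Set.Ioo (-1 : ℝ) 1 ∧
    (Polynomial.derivative (Leg r)).IsRoot (L k)

/-- Cellwise partial derivative in the first (`x`) coordinate. -/
def pdx (f : ℝ × ℝ → ℝ) (z : ℝ × ℝ) : ℝ := fderiv ℝ f z (1, 0)

/-- Cellwise partial derivative in the second (`y`) coordinate. -/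
def pdy (f : ℝ × ℝ → ℝ) (z : ℝ × ℝ) : ℝ := fderiv ℝ f z (0, 1)

/-- A rectangular partition of `Ω = [a,b] × [c,d]`:
`a = x₀ < x₁ < … < x_m = b`, `c = y₀ < y₁ < … < y_n = d`. -/
structure RectPartition (a b c d : ℝ) where
  m : ℕ
  n : ℕ
  hm : 0 < m
  hn : 0 < n
  x : ℕ → ℝ
  y : ℕ → ℝ
  hxa : x 0 = a
  hxb : x m = b
  hyc : y 0 = c
  hyd : y n = d
  hxlt : ∀ i < m, x i < x (i + 1)
  hylt : ∀ j < n, y j < y (j + 1)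

namespace RectPartition

variable {a b c d : ℝ}

/-- The domain `Ω = [a,b] × [c,d]`. -/
def dom (_P : RectPartition a b c d) : Set (ℝ × ℝ) := Set.Icc a b ×ˢ Set.Icc c d

/-- The boundary `∂Ω`. -/
def bdry (P : RectPartition a b c d) : Set (ℝ × ℝ) :=
  P.dom \ (Set.Ioo a b ×ˢ Set.Ioo c d)

variable (P : RectPartition a b c d)

/-- Side length `h_i^x = x_i − x_{i−1}`. -/
def hx (i : ℕ) : ℝ := P.x i - P.x (i - 1)

/-- Side length `h_j^y = y_j − y_{j−1}`. -/
def hy (j : ℕ) : ℝ := P.y j - P.y (j - 1)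

/-- The closed cell `τ_{i,j} = [x_{i−1}, x_i] × [y_{j−1}, y_j]`. -/
def cell (i j : ℕ) : Set (ℝ × ℝ) :=
  Set.Icc (P.x (i - 1)) (P.x i) ×ˢ Set.Icc (P.y (j - 1)) (P.y j)

/-- The open cell `(x_{i−1}, x_i) × (y_{j−1}, y_j)`. -/
def openCell (i j : ℕ) : Set (ℝ × ℝ) :=
  Set.Ioo (P.x (i - 1)) (P.x i) ×ˢ Set.Ioo (P.y (j - 1)) (P.y j)

/-- The finite set of all side lengths of the partition. -/
def sides : Finset ℝ := ((Finset.Icc 1 P.m).image P.hx) ∪ ((Finset.Icc 1 P.n).image P.hy)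

lemma sides_nonempty : P.sides.Nonempty :=
  ⟨P.hx 1, Finset.mem_union_left _
    (Finset.mem_image_of_mem _ (Finset.mem_Icc.mpr ⟨le_rfl, P.hm⟩))⟩

/-- The mesh size `h`: the largest side length. -/
def meshSize : ℝ := P.sides.max' P.sides_nonempty

/-- `σ`-quasi-uniformity: every side length is at most `σ` times any other,
i.e. `h ≤ σ · min side`. -/
def QuasiUniform (σ : ℝ) : Prop := ∀ s ∈ P.sides, ∀ t ∈ P.sides, s ≤ σ * t

variable (r : ℕ) (G : ℕ → ℝ)

/-- The Gauss point `g^x_{i,k} = (x_i + x_{i−1} + h_i^x G_k)/2` for `1 ≤ k ≤ r`,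
with the conventions `g^x_{i,r+1} = g^x_{i+1,1}` (for `i < m`) and `g^x_{m,r+1} = b`. -/
def gx (i k : ℕ) : ℝ :=
  if k = r + 1 then
    (if i = P.m then P.x P.m
     else (P.x (i + 1) + P.x i + P.hx (i + 1) * G 1) / 2)
  else (P.x i + P.x (i - 1) + P.hx i * G k) / 2

/-- The Gauss point `g^y_{j,l}`, with the analogous conventions. -/
def gy (j l : ℕ) : ℝ :=
  if l = r + 1 then
    (if j = P.n then P.y P.n
     else (P.y (j + 1) + P.y j + P.hy (j + 1) * G 1) / 2)
  else (P.y j + P.y (j - 1) + P.hy j * G l) / 2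

end RectPartition

/-- A function on `Ω` which is piecewise smooth with respect to the partition:
a global function together with, for each cell, a (smooth) extension of its
restriction to the closed cell; cellwise derivatives are derivatives of the
cell functions. -/
structure PiecewiseFun {a b c d : ℝ} (P : RectPartition a b c d) where
  toFun : ℝ × ℝ → ℝ
  cellFun : ℕ → ℕ → ℝ × ℝ → ℝ
  agree : ∀ i ∈ Finset.Icc 1 P.m, ∀ j ∈ Finset.Icc 1 P.n, ∀ z ∈ P.cell i j,
    cellFun i j z = toFun z

namespace PiecewiseFun

variable {a b c d : ℝ} {P : RectPartition a b c d}

/-- Difference of two piecewise functions. -/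
def sub (u v : PiecewiseFun P) : PiecewiseFun P where
  toFun := fun z => u.toFun z - v.toFun z
  cellFun := fun i j z => u.cellFun i j z - v.cellFun i j z
  agree := fun i hi j hj z hz => by
    simp only [u.agree i hi j hj z hz, v.agree i hi j hj z hz]

end PiecewiseFun

/-- Cellwise `∂/∂x` of a piecewise function. -/
def cellDx {a b c d : ℝ} {P : RectPartition a b c d} (v : PiecewiseFun P) :
    ℕ → ℕ → ℝ × ℝ → ℝ := fun i j => pdx (v.cellFun i j)

/-- Cellwise `∂/∂y` of a piecewise function. -/
def cellDy {a b c d : ℝ} {P : RectPartition a b c d} (v : PiecewiseFun P) :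
    ℕ → ℕ → ℝ × ℝ → ℝ := fun i j => pdy (v.cellFun i j)

/-- `v` is `C^s` on each closed cell. -/
def CellSmooth {a b c d : ℝ} (P : RectPartition a b c d) (s : ℕ)
    (u : PiecewiseFun P) : Prop :=
  ∀ i ∈ Finset.Icc 1 P.m, ∀ j ∈ Finset.Icc 1 P.n, ContDiff ℝ s (u.cellFun i j)

/-- Evaluation of a bivariate polynomial (outer variable ↦ `x`, coefficients are
polynomials in `y`). -/
def evalXY (p : Polynomial (Polynomial ℝ)) (x y : ℝ) : ℝ :=
  (p.map (Polynomial.evalRingHom y)).eval x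

/-- `f` is (globally) a polynomial of degree `≤ r` in each of the two variables. -/
def IsBiPoly (r : ℕ) (f : ℝ × ℝ → ℝ) : Prop :=
  ∃ p : Polynomial (Polynomial ℝ), p.natDegree ≤ r ∧ (∀ k, (p.coeff k).natDegree ≤ r) ∧
    ∀ x y : ℝ, f (x, y) = evalXY p x y

/-- Membership in the trial space `U_P^r`: continuous on `Ω`, vanishing on `∂Ω`,
and a bi-degree `≤ r` polynomial on each cell. -/
def IsTrialFun {a b c d : ℝ} (r : ℕ) (P : RectPartition a b c d)
    (v : PiecewiseFun P) : Prop :=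
  ContinuousOn v.toFun P.dom ∧ (∀ z ∈ P.bdry, v.toFun z = 0) ∧
  ∀ i ∈ Finset.Icc 1 P.m, ∀ j ∈ Finset.Icc 1 P.n, IsBiPoly r (v.cellFun i j)

/-- The coefficients of a test function extended by the conventions
`w_{i,0;j,l} = w_{i−1,r;j,l}` (`0` if `i = 1`) and
`w_{i,k;j,0} = w_{i,k;j−1,r}` (`0` if `j = 1`). -/
def wE (r : ℕ) (w : ℕ → ℕ → ℕ → ℕ → ℝ) (i k j l : ℕ) : ℝ :=
  if (k = 0 ∧ i = 1) ∨ (l = 0 ∧ j = 1) then 0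
  else
    w (if k = 0 then i - 1 else i) (if k = 0 then r else k)
      (if l = 0 then j - 1 else j) (if l = 0 then r else l)

/-- The jump `[w]^x_{i,k;j,l} = w_{i,k;j,l} − w_{i,k−1;j,l}`. -/
def jumpX (r : ℕ) (w : ℕ → ℕ → ℕ → ℕ → ℝ) (i k j l : ℕ) : ℝ :=
  wE r w i k j l - wE r w i (k - 1) j l

/-- The jump `[w]^y_{i,k;j,l} = w_{i,k;j,l} − w_{i,k;j,l−1}`. -/
def jumpY (r : ℕ) (w : ℕ → ℕ → ℕ → ℕ → ℝ) (i k j l : ℕ) : ℝ :=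
  wE r w i k j l - wE r w i k j (l - 1)

/-- The double jump `⌊w⌋_{i,k;j,l}`. -/
def jumpXY (r : ℕ) (w : ℕ → ℕ → ℕ → ℕ → ℝ) (i k j l : ℕ) : ℝ :=
  wE r w i k j l - wE r w i (k - 1) j l - wE r w i k j (l - 1) + wE r w i (k - 1) j (l - 1)

/-- A test function: coefficients `w_{i,k;j,l}`, `1 ≤ i ≤ m`, `1 ≤ k ≤ r`,
`1 ≤ j ≤ n`, `1 ≤ l ≤ r`, vanishing for `(i,k) = (m,r)` or `(j,l) = (n,r)`. -/
def IsTestFun {a b c d : ℝ} (r : ℕ) (P : RectPartition a b c d)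
    (w : ℕ → ℕ → ℕ → ℕ → ℝ) : Prop :=
  (∀ j ∈ Finset.Icc 1 P.n, ∀ l ∈ Finset.Icc 1 r, w P.m r j l = 0) ∧
  (∀ i ∈ Finset.Icc 1 P.m, ∀ k ∈ Finset.Icc 1 r, w i k P.n r = 0)

/-- The index set `X`: quadruples `(i,k,j,l)` with `(j,l) ≠ (n,r)`. -/
def idxX {a b c d : ℝ} (r : ℕ) (P : RectPartition a b c d) : Finset (ℕ × ℕ × ℕ × ℕ) :=
  (Finset.Icc 1 P.m ×ˢ Finset.Icc 1 r ×ˢ Finset.Icc 1 P.n ×ˢ Finset.Icc 1 r).filter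
    fun q => ¬(q.2.2.1 = P.n ∧ q.2.2.2 = r)

/-- The index set `Y`: quadruples `(i,k,j,l)` with `(i,k) ≠ (m,r)`. -/
def idxY {a b c d : ℝ} (r : ℕ) (P : RectPartition a b c d) : Finset (ℕ × ℕ × ℕ × ℕ) :=
  (Finset.Icc 1 P.m ×ˢ Finset.Icc 1 r ×ˢ Finset.Icc 1 P.n ×ˢ Finset.Icc 1 r).filter
    fun q => ¬(q.1 = P.m ∧ q.2.1 = r)

/-- The index set of interior dual volumes: `(i,k) ≠ (m,r)` and `(j,l) ≠ (n,r)`. -/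
def idxZ {a b c d : ℝ} (r : ℕ) (P : RectPartition a b c d) : Finset (ℕ × ℕ × ℕ × ℕ) :=
  (Finset.Icc 1 P.m ×ˢ Finset.Icc 1 r ×ˢ Finset.Icc 1 P.n ×ˢ Finset.Icc 1 r).filter
    fun q => ¬(q.1 = P.m ∧ q.2.1 = r) ∧ ¬(q.2.2.1 = P.n ∧ q.2.2.2 = r)

/-- The dual-mesh seminorm `|w|_{P'}`. -/
def dualSemi {a b c d : ℝ} (r : ℕ) (P : RectPartition a b c d)
    (w : ℕ → ℕ → ℕ → ℕ → ℝ) : ℝ :=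
  Real.sqrt
    ((∑ q ∈ idxX r P, (jumpX r w q.1 q.2.1 q.2.2.1 q.2.2.2) ^ 2) +
     (∑ q ∈ idxY r P, (jumpY r w q.1 q.2.1 q.2.2.1 q.2.2.2) ^ 2))

/-- The FVM bilinear form `a_P(v, w)`, with the cellwise derivatives of `v`
given by `Dxv i j` and `Dyv i j` on cell `(i,j)`.  The integrals along Gauss
lines are split at the cell interfaces `y = y_j` (resp. `x = x_i`), which only
matters for the last Gauss subinterval `l = r` (resp. `k = r`). -/
def aP {a b c d : ℝ} (r : ℕ) (G : ℕ → ℝ) (P : RectPartition a b c d)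
    (α : ℝ × ℝ → ℝ) (Dxv Dyv : ℕ → ℕ → ℝ × ℝ → ℝ) (w : ℕ → ℕ → ℕ → ℕ → ℝ) : ℝ :=
  (∑ q ∈ idxX r P,
    jumpX r w q.1 q.2.1 q.2.2.1 q.2.2.2 *
      ((∫ t in (P.gy r G q.2.2.1 q.2.2.2)..(min (P.gy r G q.2.2.1 (q.2.2.2 + 1)) (P.y q.2.2.1)),
          α (P.gx r G q.1 q.2.1, t) * Dxv q.1 q.2.2.1 (P.gx r G q.1 q.2.1, t)) +
       (∫ t in (P.y q.2.2.1)..(max (P.gy r G q.2.2.1 (q.2.2.2 + 1)) (P.y q.2.2.1)),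
          α (P.gx r G q.1 q.2.1, t) * Dxv q.1 (q.2.2.1 + 1) (P.gx r G q.1 q.2.1, t)))) +
  (∑ q ∈ idxY r P,
    jumpY r w q.1 q.2.1 q.2.2.1 q.2.2.2 *
      ((∫ t in (P.gx r G q.1 q.2.1)..(min (P.gx r G q.1 (q.2.1 + 1)) (P.x q.1)),
          α (t, P.gy r G q.2.2.1 q.2.2.2) * Dyv q.1 q.2.2.1 (t, P.gy r G q.2.2.1 q.2.2.2)) +
       (∫ t in (P.x q.1)..(max (P.gx r G q.1 (q.2.1 + 1)) (P.x q.1)),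
          α (t, P.gy r G q.2.2.1 q.2.2.2) * Dyv (q.1 + 1) q.2.2.1 (t, P.gy r G q.2.2.1 q.2.2.2))))

/-- The broken `H¹` seminorm `|v|₁` computed cellwise. -/
def semiH1 {a b c d : ℝ} (P : RectPartition a b c d) (v : PiecewiseFun P) : ℝ :=
  Real.sqrt (∑ i ∈ Finset.Icc 1 P.m, ∑ j ∈ Finset.Icc 1 P.n,
    ∫ z in P.cell i j, ((cellDx v i j z) ^ 2 + (cellDy v i j z) ^ 2))

/-- The mesh-dependent seminorm `|v|_P` (broken `H²`-type seminorm). -/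
def semiP {a b c d : ℝ} (P : RectPartition a b c d) (v : PiecewiseFun P) : ℝ :=
  Real.sqrt (∑ i ∈ Finset.Icc 1 P.m, ∑ j ∈ Finset.Icc 1 P.n,
    ((∫ z in P.cell i j, ((cellDx v i j z) ^ 2 + (cellDy v i j z) ^ 2)) +
      (P.hx i ^ 2 + P.hy j ^ 2) *
        ∫ z in P.cell i j,
          ((pdx (pdx (v.cellFun i j)) z) ^ 2 + 2 * (pdy (pdx (v.cellFun i j)) z) ^ 2 +
            (pdy (pdy (v.cellFun i j)) z) ^ 2)))

/-- The broken seminorm `|u|_{s,P}`. -/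
def brokenSemi {a b c d : ℝ} (P : RectPartition a b c d) (u : PiecewiseFun P) (s : ℕ) : ℝ :=
  Real.sqrt (∑ i ∈ Finset.Icc 1 P.m, ∑ j ∈ Finset.Icc 1 P.n, ∑ t ∈ Finset.range (s + 1),
    ∫ z in P.cell i j, (pdx^[t] (pdy^[s - t] (u.cellFun i j)) z) ^ 2)

/-- The broken norm `‖u‖_{s,P} = (Σ_{t=0}^{s} |u|_{t,P}²)^{1/2}`. -/
def brokenNorm {a b c d : ℝ} (P : RectPartition a b c d) (u : PiecewiseFun P) (s : ℕ) : ℝ :=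
  Real.sqrt (∑ t ∈ Finset.range (s + 1), (brokenSemi P u t) ^ 2)

/-- `w = Πv`: the test function determined by the double-jump constraints
`⌊Πv⌋_{i,k;j,l} = A^x_{i,k} A^y_{j,l} ∂²v/∂x∂y(g^x_{i,k}, g^y_{j,l})`. -/
def IsPiOf {a b c d : ℝ} (r : ℕ) (G A : ℕ → ℝ) (P : RectPartition a b c d)
    (v : PiecewiseFun P) (w : ℕ → ℕ → ℕ → ℕ → ℝ) : Prop :=
  IsTestFun r P w ∧
  ∀ i ∈ Finset.Icc 1 P.m, ∀ k ∈ Finset.Icc 1 r, ∀ j ∈ Finset.Icc 1 P.n, ∀ l ∈ Finset.Icc 1 r,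
    ¬(i = P.m ∧ k = r) → ¬(j = P.n ∧ l = r) →
    jumpXY r w i k j l =
      (P.hx i * A k / 2) * (P.hy j * A l / 2) *
        pdy (pdx (v.cellFun i j)) (P.gx r G i k, P.gy r G j l)

/-- `α` is piecewise constant with respect to `P`. -/
def PiecewiseConstant {a b c d : ℝ} (P : RectPartition a b c d) (α : ℝ × ℝ → ℝ) : Prop :=
  ∀ i ∈ Finset.Icc 1 P.m, ∀ j ∈ Finset.Icc 1 P.n, ∃ cst : ℝ, ∀ z ∈ P.openCell i j, α z = cst

/-- The cellwise fluxes `α ∂u/∂x`, `α ∂u/∂y` extend continuously to `Ω`. -/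
def FluxContinuous {a b c d : ℝ} (P : RectPartition a b c d) (α : ℝ × ℝ → ℝ)
    (u : PiecewiseFun P) : Prop :=
  ∃ Fx Fy : ℝ × ℝ → ℝ, ContinuousOn Fx P.dom ∧ ContinuousOn Fy P.dom ∧
    ∀ i ∈ Finset.Icc 1 P.m, ∀ j ∈ Finset.Icc 1 P.n, ∀ z ∈ P.openCell i j,
      Fx z = α z * cellDx u i j z ∧ Fy z = α z * cellDy u i j z

/-- The iterated integral of `f` over the rectangle `[x₁,x₂] × [y₁,y₂]`. -/
def rectInt (f : ℝ × ℝ → ℝ) (x₁ x₂ y₁ y₂ : ℝ) : ℝ :=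
  ∫ s in x₁..x₂, ∫ t in y₁..y₂, f (s, t)

/-- The integral over the dual volume `τ'_{i,k;j,l} = [g^x_{i,k}, g^x_{i,k+1}] ×
[g^y_{j,l}, g^y_{j,l+1}]` of a cellwise-defined integrand `F i j`, split along
the cell interfaces `x = x_i` and `y = y_j`. -/
def dualCellInt {a b c d : ℝ} (r : ℕ) (G : ℕ → ℝ) (P : RectPartition a b c d)
    (F : ℕ → ℕ → ℝ × ℝ → ℝ) (i k j l : ℕ) : ℝ :=
  rectInt (F i j) (P.gx r G i k) (min (P.gx r G i (k + 1)) (P.x i))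
    (P.gy r G j l) (min (P.gy r G j (l + 1)) (P.y j)) +
  rectInt (F (i + 1) j) (P.x i) (max (P.gx r G i (k + 1)) (P.x i))
    (P.gy r G j l) (min (P.gy r G j (l + 1)) (P.y j)) +
  rectInt (F i (j + 1)) (P.gx r G i k) (min (P.gx r G i (k + 1)) (P.x i))
    (P.y j) (max (P.gy r G j (l + 1)) (P.y j)) +
  rectInt (F (i + 1) (j + 1)) (P.x i) (max (P.gx r G i (k + 1)) (P.x i))
    (P.y j) (max (P.gy r G j (l + 1)) (P.y j))

/-- The cellwise source term `f = −α (∂²u/∂x² + ∂²u/∂y²)` (for piecewise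
constant `α`). -/
def cellSource {a b c d : ℝ} {P : RectPartition a b c d} (α : ℝ × ℝ → ℝ)
    (u : PiecewiseFun P) (i j : ℕ) (z : ℝ × ℝ) : ℝ :=
  -(α z * (pdx (pdx (u.cellFun i j)) z + pdy (pdy (u.cellFun i j)) z))

/-- The right-hand side `Σ w_{i,k;j,l} ∫_{τ'_{i,k;j,l}} f` of the FV scheme. -/
def fvRHS {a b c d : ℝ} (r : ℕ) (G : ℕ → ℝ) (P : RectPartition a b c d)
    (α : ℝ × ℝ → ℝ) (u : PiecewiseFun P) (w : ℕ → ℕ → ℕ → ℕ → ℝ) : ℝ :=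
  ∑ q ∈ idxZ r P, w q.1 q.2.1 q.2.2.1 q.2.2.2 *
    dualCellInt r G P (cellSource α u) q.1 q.2.1 q.2.2.1 q.2.2.2

/-- `uP` is a finite volume solution for the exact solution `u`. -/
def IsFVSolution {a b c d : ℝ} (r : ℕ) (G : ℕ → ℝ) (P : RectPartition a b c d)
    (α : ℝ × ℝ → ℝ) (u uP : PiecewiseFun P) : Prop :=
  IsTrialFun r P uP ∧
  ∀ w, IsTestFun r P w → aP r G P α (cellDx uP) (cellDy uP) w = fvRHS r G P α u w

/-- The Lobatto node in cell `(i,j)` with 0-based indices `0 ≤ k, l ≤ r`. -/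
def lobattoNode {a b c d : ℝ} (P : RectPartition a b c d) (L : ℕ → ℝ)
    (i j k l : ℕ) : ℝ × ℝ :=
  ((P.x (i - 1) + P.x i + P.hx i * L k) / 2, (P.y (j - 1) + P.y j + P.hy j * L l) / 2)

/-- `uI` is the Lobatto interpolant of `u` in the trial space `U_P^r`. -/
def IsLobattoInterp {a b c d : ℝ} (r : ℕ) (L : ℕ → ℝ) (P : RectPartition a b c d)
    (u : ℝ × ℝ → ℝ) (uI : PiecewiseFun P) : Prop :=
  IsTrialFun r P uI ∧
  ∀ i ∈ Finset.Icc 1 P.m, ∀ j ∈ Finset.Icc 1 P.n,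
    ∀ k ∈ Finset.Icc 0 r, ∀ l ∈ Finset.Icc 0 r,
      uI.toFun (lobattoNode P L i j k l) = u (lobattoNode P L i j k l)

/-- The piecewise oscillation `osc_P(α)`: the maximum over all cells of
`ess sup α − ess inf α`. -/
def oscP {a b c d : ℝ} (P : RectPartition a b c d) (α : ℝ × ℝ → ℝ) : ℝ :=
  (Finset.Icc 1 P.m ×ˢ Finset.Icc 1 P.n).sup'
    (Finset.Nonempty.product (Finset.nonempty_Icc.mpr P.hm) (Finset.nonempty_Icc.mpr P.hn))
    fun p => essSup α (volume.restrict (P.cell p.1 p.2)) -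
      essInf α (volume.restrict (P.cell p.1 p.2))

end

/-! The fluxes `F = α ∂u/∂x` and `H = α ∂u/∂y` are continuous, so the line integrals of
`a_P(u, w)`, split at the cell interfaces, recombine into integrals along whole Gauss lines.
By Green's theorem `∫_{τ'} f` is the net inflow of `(F, H)` through the four sides of the dual
volume `τ'`. Along each grid line the Gauss points, ordered lexicographically in `(i, k)` and
glued by `g_{i,r+1} = g_{i+1,1}`, form a single sequence, and summation by parts along it
trades the jumps `[w]` against side integrals for `w` against their differences; the boundary
term vanishes because `w` vanishes at `(m, r)` and at `(n, r)`. -/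

open Finset

theorem intervalIntegral.integral_min_add_integral_max {E : Type*} [NormedAddCommGroup E]
    [NormedSpace ℝ E] {f : ℝ → E} {μ : Measure ℝ} {a b c : ℝ}
    (hac : IntervalIntegrable f μ a c) (hcb : IntervalIntegrable f μ c b) :
    (∫ x in a..min b c, f x ∂μ) + ∫ x in c..max b c, f x ∂μ = ∫ x in a..b, f x ∂μ := by
  rcases le_total b c with hbc | hcb'
  · rw [min_eq_left hbc, max_eq_right hbc, intervalIntegral.integral_same, add_zero]
  · rw [min_eq_right hcb', max_eq_left hcb',
      intervalIntegral.integral_add_adjacent_intervals hac hcb]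

theorem rectInt_pdx_add_pdy {F H : ℝ × ℝ → ℝ} (hF : ContDiff ℝ 1 F) (hH : ContDiff ℝ 1 H)
    (x₁ x₂ y₁ y₂ : ℝ) :
    rectInt (fun z => pdx F z + pdy H z) x₁ x₂ y₁ y₂ =
      (∫ t in y₁..y₂, F (x₂, t)) - (∫ t in y₁..y₂, F (x₁, t)) +
        ((∫ s in x₁..x₂, H (s, y₂)) - ∫ s in x₁..x₂, H (s, y₁)) := by
  have hdiv : Continuous fun z => fderiv ℝ F z (1, 0) + fderiv ℝ H z (0, 1) :=
    ((hF.continuous_fderiv one_ne_zero).clm_apply continuous_const).add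
      ((hH.continuous_fderiv one_ne_zero).clm_apply continuous_const)
  refine (integral2_divergence_prod_of_hasFDerivAt_off_countable F H (fderiv ℝ F) (fderiv ℝ H)
    x₁ y₁ x₂ y₂ ∅ Set.countable_empty hF.continuous.continuousOn hH.continuous.continuousOn
    (fun z _ => (hF.differentiable one_ne_zero z).hasFDerivAt)
    (fun z _ => (hH.differentiable one_ne_zero z).hasFDerivAt)
    (hdiv.continuousOn.integrableOn_compact (isCompact_uIcc.prod isCompact_uIcc))).trans ?_
  ring

theorem sum_Icc_sub_mul_eq_sum_mul_sub {R : Type*} [CommRing R] (E V : ℕ → R) (r : ℕ) :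
    ∑ k ∈ Icc 1 r, (E k - E (k - 1)) * V k =
      ∑ k ∈ Icc 1 r, E k * (V k - V (k + 1)) + E r * V (r + 1) - E 0 * V 1 := by
  induction r with
  | zero => simp
  | succ r ih =>
    rw [sum_Icc_succ_top (by omega), sum_Icc_succ_top (by omega), ih, Nat.add_sub_cancel]
    ring

theorem sum_Icc_sum_Icc_sub_mul_eq_sum_mul_sub {R : Type*} [CommRing R] (E V : ℕ → ℕ → R)
    {m r : ℕ} (hm : 1 ≤ m) (hE₁ : E 1 0 = 0) (hE : ∀ i, 1 ≤ i → i < m → E (i + 1) 0 = E i r)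
    (hV : ∀ i, 1 ≤ i → i < m → V i (r + 1) = V (i + 1) 1) :
    ∑ i ∈ Icc 1 m, ∑ k ∈ Icc 1 r, (E i k - E i (k - 1)) * V i k =
      ∑ i ∈ Icc 1 m, ∑ k ∈ Icc 1 r, E i k * (V i k - V i (k + 1)) + E m r * V m (r + 1) := by
  induction m, hm using Nat.le_induction with
  | base => simp [sum_Icc_sub_mul_eq_sum_mul_sub, hE₁]
  | succ m hm ih =>
    rw [sum_Icc_succ_top (by omega), sum_Icc_succ_top (by omega),
      ih (fun i h₁ h₂ => hE i h₁ (by omega)) (fun i h₁ h₂ => hV i h₁ (by omega)),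
      sum_Icc_sub_mul_eq_sum_mul_sub, hE m hm (by omega), hV m hm (by omega)]
    ring

theorem Finset.sum_sum_sum_sum_comm {ι κ ι' κ' M : Type*} [AddCommMonoid M] (A : Finset ι)
    (B : Finset κ) (C : Finset ι') (D : Finset κ') (g : ι → κ → ι' → κ' → M) :
    ∑ i ∈ A, ∑ k ∈ B, ∑ j ∈ C, ∑ l ∈ D, g i k j l =
      ∑ j ∈ C, ∑ l ∈ D, ∑ i ∈ A, ∑ k ∈ B, g i k j l :=
  (sum_congr rfl fun _ _ => sum_comm).trans
    (sum_comm.trans (sum_congr rfl fun _ _ => (sum_congr rfl fun _ _ => sum_comm).trans sum_comm))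

theorem RectPartition.gx_r_add_one {a b c d : ℝ} (P : RectPartition a b c d) {r : ℕ}
    (G : ℕ → ℝ) (hr : r ≠ 0) {i : ℕ} (hi : i ≠ P.m) :
    P.gx r G i (r + 1) = P.gx r G (i + 1) 1 := by
  simp [RectPartition.gx, hi, hr]

theorem RectPartition.gy_r_add_one {a b c d : ℝ} (P : RectPartition a b c d) {r : ℕ}
    (G : ℕ → ℝ) (hr : r ≠ 0) {j : ℕ} (hj : j ≠ P.n) :
    P.gy r G j (r + 1) = P.gy r G (j + 1) 1 := by
  simp [RectPartition.gy, hj, hr]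

section TestFunction

variable {r : ℕ} {w : ℕ → ℕ → ℕ → ℕ → ℝ}

theorem wE_of_ne_zero {i k j l : ℕ} (hk : k ≠ 0) (hl : l ≠ 0) : wE r w i k j l = w i k j l := by
  simp [wE, hk, hl]

theorem wE_zero_left {i j l : ℕ} (hl : l ≠ 0) :
    wE r w i 0 j l = if i = 1 then 0 else w (i - 1) r j l := by
  simp [wE, hl]

theorem wE_transpose (i k j l : ℕ) :
    wE r (fun j l i k => w i k j l) j l i k = wE r w i k j l := by
  simp only [wE, or_comm]

theorem wE_zero_right {i k j : ℕ} (hk : k ≠ 0) :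
    wE r w i k j 0 = if j = 1 then 0 else w i k (j - 1) r := by
  rw [← wE_transpose, wE_zero_left hk]

theorem jumpX_transpose (i k j l : ℕ) :
    jumpX r (fun j l i k => w i k j l) j l i k = jumpY r w i k j l := by
  simp only [jumpX, jumpY, wE_transpose]

theorem sum_jumpX_mul_eq {m j l : ℕ} (hm : 1 ≤ m) (hr : r ≠ 0) (hl : l ≠ 0)
    (hw : w m r j l = 0) (V : ℕ → ℕ → ℝ) (hV : ∀ i, 1 ≤ i → i < m → V i (r + 1) = V (i + 1) 1) :
    ∑ i ∈ Icc 1 m, ∑ k ∈ Icc 1 r, jumpX r w i k j l * V i k =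
      ∑ i ∈ Icc 1 m, ∑ k ∈ Icc 1 r, w i k j l * (V i k - V i (k + 1)) := by
  have h := sum_Icc_sum_Icc_sub_mul_eq_sum_mul_sub (fun i k => wE r w i k j l) V hm
    (by simp [wE_zero_left hl])
    (fun i hi _ => by rw [wE_zero_left hl, if_neg (by omega), Nat.add_sub_cancel,
      wE_of_ne_zero hr hl]) hV
  rw [wE_of_ne_zero hr hl, hw, zero_mul, add_zero] at h
  refine h.trans (sum_congr rfl fun i _ => sum_congr rfl fun k hk => ?_)
  rw [wE_of_ne_zero (by simp only [mem_Icc] at hk; omega) hl]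

theorem sum_jumpY_mul_eq {n i k : ℕ} (hn : 1 ≤ n) (hr : r ≠ 0) (hk : k ≠ 0)
    (hw : w i k n r = 0) (V : ℕ → ℕ → ℝ) (hV : ∀ j, 1 ≤ j → j < n → V j (r + 1) = V (j + 1) 1) :
    ∑ j ∈ Icc 1 n, ∑ l ∈ Icc 1 r, jumpY r w i k j l * V j l =
      ∑ j ∈ Icc 1 n, ∑ l ∈ Icc 1 r, w i k j l * (V j l - V j (l + 1)) := by
  simpa only [jumpX_transpose] using
    sum_jumpX_mul_eq (w := fun j l i k => w i k j l) hn hr hk hw V hV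

variable {a b c d : ℝ} {P : RectPartition a b c d}

theorem IsTestFun.wE_last_right (hw : IsTestFun r P w) (hr : r ≠ 0) {i k : ℕ}
    (hi : i ∈ Icc 1 P.m) (hk : k ≤ r) : wE r w i k P.n r = 0 := by
  rw [mem_Icc] at hi
  rcases eq_or_ne k 0 with rfl | hk₀
  · rw [wE_zero_left hr]
    split_ifs
    · rfl
    · exact hw.2 _ (mem_Icc.2 ⟨by omega, by omega⟩) r (mem_Icc.2 ⟨by omega, le_rfl⟩)
  · rw [wE_of_ne_zero hk₀ hr]
    exact hw.2 i (mem_Icc.2 hi) k (mem_Icc.2 ⟨by omega, hk⟩)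

theorem IsTestFun.wE_last_left (hw : IsTestFun r P w) (hr : r ≠ 0) {j l : ℕ}
    (hj : j ∈ Icc 1 P.n) (hl : l ≤ r) : wE r w P.m r j l = 0 := by
  rw [mem_Icc] at hj
  rcases eq_or_ne l 0 with rfl | hl₀
  · rw [wE_zero_right hr]
    split_ifs
    · rfl
    · exact hw.1 _ (mem_Icc.2 ⟨by omega, by omega⟩) r (mem_Icc.2 ⟨by omega, le_rfl⟩)
  · rw [wE_of_ne_zero hr hl₀]
    exact hw.1 j (mem_Icc.2 hj) l (mem_Icc.2 ⟨by omega, hl⟩)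

theorem IsTestFun.sum_idxX (hw : IsTestFun r P w) (g : ℕ × ℕ × ℕ × ℕ → ℝ) :
    ∑ q ∈ idxX r P, jumpX r w q.1 q.2.1 q.2.2.1 q.2.2.2 * g q =
      ∑ i ∈ Icc 1 P.m, ∑ k ∈ Icc 1 r, ∑ j ∈ Icc 1 P.n, ∑ l ∈ Icc 1 r,
        jumpX r w i k j l * g (i, k, j, l) := by
  rw [idxX, sum_filter_of_ne]
  · simp only [sum_product]
  rintro ⟨i, k, j, l⟩ hq hne ⟨hj, hl⟩
  dsimp only at hj hl hne
  subst j l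
  simp only [mem_product, mem_Icc] at hq
  refine hne ?_
  rw [jumpX, hw.wE_last_right (by omega) (mem_Icc.2 hq.1) (by omega),
    hw.wE_last_right (by omega) (mem_Icc.2 hq.1) (by omega), sub_zero, zero_mul]

theorem IsTestFun.sum_idxY (hw : IsTestFun r P w) (g : ℕ × ℕ × ℕ × ℕ → ℝ) :
    ∑ q ∈ idxY r P, jumpY r w q.1 q.2.1 q.2.2.1 q.2.2.2 * g q =
      ∑ i ∈ Icc 1 P.m, ∑ k ∈ Icc 1 r, ∑ j ∈ Icc 1 P.n, ∑ l ∈ Icc 1 r,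
        jumpY r w i k j l * g (i, k, j, l) := by
  rw [idxY, sum_filter_of_ne]
  · simp only [sum_product]
  rintro ⟨i, k, j, l⟩ hq hne ⟨hi, hk⟩
  dsimp only at hi hk hne
  subst i k
  simp only [mem_product, mem_Icc] at hq
  refine hne ?_
  rw [jumpY, hw.wE_last_left (by omega) (mem_Icc.2 hq.2.2.1) (by omega),
    hw.wE_last_left (by omega) (mem_Icc.2 hq.2.2.1) (by omega), sub_zero, zero_mul]

theorem IsTestFun.sum_idxZ (hw : IsTestFun r P w) (g : ℕ × ℕ × ℕ × ℕ → ℝ) :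
    ∑ q ∈ idxZ r P, w q.1 q.2.1 q.2.2.1 q.2.2.2 * g q =
      ∑ i ∈ Icc 1 P.m, ∑ k ∈ Icc 1 r, ∑ j ∈ Icc 1 P.n, ∑ l ∈ Icc 1 r,
        w i k j l * g (i, k, j, l) := by
  rw [idxZ, sum_filter_of_ne]
  · simp only [sum_product]
  rintro ⟨i, k, j, l⟩ hq hne
  simp only [mem_product] at hq
  refine ⟨?_, ?_⟩ <;> rintro ⟨rfl, rfl⟩ <;> refine hne ?_
  · rw [hw.1 j hq.2.2.1 l hq.2.2.2, zero_mul]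
  · rw [hw.2 i hq.1 k hq.2.1, zero_mul]

end TestFunction

theorem aP_eq_sum_of_continuous {r : ℕ} {G : ℕ → ℝ} {a b c d : ℝ} {P : RectPartition a b c d}
    {α Dx Dy : ℝ × ℝ → ℝ} (hx : Continuous fun z => α z * Dx z)
    (hy : Continuous fun z => α z * Dy z) (w : ℕ → ℕ → ℕ → ℕ → ℝ) :
    aP r G P α (fun _ _ => Dx) (fun _ _ => Dy) w =
      (∑ q ∈ idxX r P, jumpX r w q.1 q.2.1 q.2.2.1 q.2.2.2 *
        ∫ t in (P.gy r G q.2.2.1 q.2.2.2)..(P.gy r G q.2.2.1 (q.2.2.2 + 1)),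
          α (P.gx r G q.1 q.2.1, t) * Dx (P.gx r G q.1 q.2.1, t)) +
      ∑ q ∈ idxY r P, jumpY r w q.1 q.2.1 q.2.2.1 q.2.2.2 *
        ∫ s in (P.gx r G q.1 q.2.1)..(P.gx r G q.1 (q.2.1 + 1)),
          α (s, P.gy r G q.2.2.1 q.2.2.2) * Dy (s, P.gy r G q.2.2.1 q.2.2.2) := by
  have hx' : ∀ s t₁ t₂, IntervalIntegrable (fun t => α (s, t) * Dx (s, t)) volume t₁ t₂ :=
    fun s => (hx.comp (Continuous.prodMk_right s)).intervalIntegrable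
  have hy' : ∀ t s₁ s₂, IntervalIntegrable (fun s => α (s, t) * Dy (s, t)) volume s₁ s₂ :=
    fun t => (hy.comp (Continuous.prodMk_left t)).intervalIntegrable
  simp only [aP, intervalIntegral.integral_min_add_integral_max (hx' _ _ _) (hx' _ _ _),
    intervalIntegral.integral_min_add_integral_max (hy' _ _ _) (hy' _ _ _)]

theorem fvm_variational_exactness_general (r : ℕ) (hr : 1 ≤ r) (G : ℕ → ℝ)
    {a b c d : ℝ}
    (P : RectPartition a b c d)
    (α : ℝ × ℝ → ℝ) (hα : ContDiff ℝ 1 α)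
    (u : ℝ × ℝ → ℝ) (hu : ContDiff ℝ 2 u)
    (f : ℝ × ℝ → ℝ)
    (hf : ∀ z, f z = -(pdx (fun z' => α z' * pdx u z') z +
                        pdy (fun z' => α z' * pdy u z') z))
    (w : ℕ → ℕ → ℕ → ℕ → ℝ) (hw : IsTestFun r P w) :
    aP r G P α (fun _ _ => pdx u) (fun _ _ => pdy u) w =
      ∑ q ∈ idxZ r P, w q.1 q.2.1 q.2.2.1 q.2.2.2 *
        rectInt f (P.gx r G q.1 q.2.1) (P.gx r G q.1 (q.2.1 + 1))
          (P.gy r G q.2.2.1 q.2.2.2) (P.gy r G q.2.2.1 (q.2.2.2 + 1)) := by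
  set F : ℝ × ℝ → ℝ := fun z => α z * pdx u z
  set H : ℝ × ℝ → ℝ := fun z => α z * pdy u z
  have hDu : ContDiff ℝ 1 (fderiv ℝ u) := hu.fderiv_right (by norm_num)
  have hF : ContDiff ℝ 1 F := hα.mul (hDu.clm_apply contDiff_const)
  have hH : ContDiff ℝ 1 H := hα.mul (hDu.clm_apply contDiff_const)
  have hf_rect : ∀ x₁ x₂ y₁ y₂, rectInt f x₁ x₂ y₁ y₂ =
      ((∫ t in y₁..y₂, F (x₁, t)) - ∫ t in y₁..y₂, F (x₂, t)) +
        ((∫ s in x₁..x₂, H (s, y₁)) - ∫ s in x₁..x₂, H (s, y₂)) := by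
    intro x₁ x₂ y₁ y₂
    have hneg : rectInt f x₁ x₂ y₁ y₂ = -rectInt (fun z => pdx F z + pdy H z) x₁ x₂ y₁ y₂ := by
      simp only [rectInt, hf, intervalIntegral.integral_neg]
    rw [hneg, rectInt_pdx_add_pdy hF hH]
    ring
  have hr₀ : r ≠ 0 := by omega
  rw [aP_eq_sum_of_continuous hF.continuous hH.continuous, hw.sum_idxX, hw.sum_idxY, hw.sum_idxZ]
  simp only [hf_rect, mul_add, sum_add_distrib]
  congr 1
  · rw [sum_sum_sum_sum_comm (Icc 1 P.m), sum_sum_sum_sum_comm (Icc 1 P.m)]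
    refine sum_congr rfl fun j hj => sum_congr rfl fun l hl => ?_
    refine sum_jumpX_mul_eq P.hm hr₀ (by simp only [mem_Icc] at hl; omega) (hw.1 j hj l hl) _
      fun i _ hi => ?_
    rw [P.gx_r_add_one G hr₀ hi.ne]
  · refine sum_congr rfl fun i hi => sum_congr rfl fun k hk => ?_
    refine sum_jumpY_mul_eq P.hn hr₀ (by simp only [mem_Icc] at hk; omega) (hw.2 i hi k hk) _
      fun j _ hj => ?_
    rw [P.gy_r_add_one G hr₀ hj.ne]

/-- Variational exactness of the FVM bilinear form: if `α` is `C¹`, `u` is `C²`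
and vanishes on `∂Ω`, and `f = −∂x(α ∂u/∂x) − ∂y(α ∂u/∂y)`, then for every test
function `w`, `a_P(u, w) = Σ_{(i,k;j,l)} w_{i,k;j,l} ∫_{τ'_{i,k;j,l}} f`. -/
theorem fvm_variational_exactness (r : ℕ) (hr : 1 ≤ r) (G : ℕ → ℝ)
    (hG : IsGaussPoints r G) {a b c d : ℝ} (hab : a < b) (hcd : c < d)
    (P : RectPartition a b c d)
    (α : ℝ × ℝ → ℝ) (hα : ContDiff ℝ 1 α)
    (u : ℝ × ℝ → ℝ) (hu : ContDiff ℝ 2 u) (hub : ∀ z ∈ P.bdry, u z = 0)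
    (f : ℝ × ℝ → ℝ)
    (hf : ∀ z, f z = -(pdx (fun z' => α z' * pdx u z') z +
                        pdy (fun z' => α z' * pdy u z') z))
    (w : ℕ → ℕ → ℕ → ℕ → ℝ) (hw : IsTestFun r P w) :
    aP r G P α (fun _ _ => pdx u) (fun _ _ => pdy u) w =
      ∑ q ∈ idxZ r P, w q.1 q.2.1 q.2.2.1 q.2.2.2 *
        rectInt f (P.gx r G q.1 q.2.1) (P.gx r G q.1 (q.2.1 + 1))
          (P.gy r G q.2.2.1 q.2.2.2) (P.gy r G q.2.2.1 (q.2.2.2 + 1)) :=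
  fvm_variational_exactness_general r hr G P α hα u hu f hf w hw
end

section
/- For every integer r ≥ 1 and every σ ≥ 1 there is a constant M_0 > 0 depending only on r and σ such that: for every σ-quasi-uniform rectangular partition P of Ω, every bounded measurable α : Ω → ℝ, every function v : Ω → ℝ that is continuous on Ω, vanishes on ∂Ω, and is C^2 on each closed cell, and every test function w, one has |a_P(v, w)| ≤ M_0 · (sup |α|) · |v|_P · |w|_{P'}. -/
open Polynomial MeasureTheory

/-!
Each term of `a_P(v, w)` is a jump of `w` times the integral of `α ∂v` along a piece of a Gauss
line, and such a piece meets at most two cells. Inside one cell, Cauchy–Schwarz with `|α| ≤ αM`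
bounds the square of the integral by `αM² h_y ∫ (∂ₓv)²` over the whole segment crossing the cell,
and the one-dimensional trace inequality `f(g)² ≤ (2/h) ∫ f² + h ∫ f'²`, integrated across the
cell, bounds this by `αM² h_y ((2/h_x) ‖∂ₓv‖² + h_x ‖∂ₓ²v‖²)` on the cell. Quasi-uniformity turns
`h_y / h_x` into `σ`, so every squared flux is at most `4σαM²` times the energies of the cells it
meets. Every cell is met by at most `2r²` pieces, and Cauchy–Schwarz over the index sets `X`, `Y`
gives the bound with `M₀ = 6σr`.
-/

open Set intervalIntegral
open scoped Interval

lemma abs_intervalIntegral_le_integral_abs {u : ℝ → ℝ} {c d s t : ℝ}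
    (hu : IntervalIntegrable u volume c d) (hs : s ∈ Icc c d) (ht : t ∈ Icc c d) :
    |∫ x in s..t, u x| ≤ ∫ x in c..d, |u x| := by
  have hcd : c ≤ d := hs.1.trans hs.2
  have hsub : Ι s t ⊆ Ι c d := by
    rw [uIoc_of_le hcd]
    exact Ioc_subset_Ioc (le_min hs.1 ht.1) (max_le hs.2 ht.2)
  calc |∫ x in s..t, u x|
    _ ≤ |(∫ x in s..t, |u x|)| := by
      simpa only [Real.norm_eq_abs] using norm_integral_le_abs_integral_norm (f := u)
    _ ≤ |(∫ x in c..d, |u x|)| :=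
      abs_integral_mono_interval hsub (Filter.Eventually.of_forall fun _ => abs_nonneg _) hu.abs
    _ = ∫ x in c..d, |u x| := abs_of_nonneg (integral_nonneg hcd fun _ _ => abs_nonneg _)

lemma sq_intervalIntegral_le {F : ℝ → ℝ} {c d : ℝ} (hF : ContinuousOn F (Icc c d))
    (hcd : c ≤ d) : (∫ x in c..d, F x) ^ 2 ≤ (d - c) * ∫ x in c..d, F x ^ 2 := by
  have hF' : ContinuousOn F (uIcc c d) := by rwa [uIcc_of_le hcd]
  set I := ∫ x in c..d, F x
  set μ := I / (d - c)
  have hvar : 0 ≤ ∫ x in c..d, (F x ^ 2 - 2 * μ * F x + μ ^ 2) :=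
    integral_nonneg hcd fun x _ => by nlinarith [sq_nonneg (F x - μ)]
  rw [integral_add (f := fun x => F x ^ 2 - 2 * μ * F x) (g := fun _ => μ ^ 2)
      ((hF'.pow 2).sub (hF'.const_smul (2 * μ))).intervalIntegrable intervalIntegrable_const,
    integral_sub (f := fun x => F x ^ 2) (g := fun x => 2 * μ * F x)
      (hF'.pow 2).intervalIntegrable (hF'.const_smul (2 * μ)).intervalIntegrable,
    intervalIntegral.integral_const_mul, intervalIntegral.integral_const, smul_eq_mul] at hvar
  rcases hcd.eq_or_lt with rfl | hlt
  · simp [I]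
  · have hL : 0 < d - c := sub_pos.2 hlt
    have hμ : μ * (d - c) = I := by simp only [μ]; field_simp
    have := mul_nonneg hL.le hvar
    nlinarith

lemma sq_intervalIntegral_mul_le {f F : ℝ → ℝ} {c d s t M : ℝ} (hf : Measurable f)
    (hF : ContinuousOn F (Icc c d)) (hbd : ∀ x ∈ Icc c d, |f x| ≤ M) (hs : s ∈ Icc c d)
    (ht : t ∈ Icc c d) :
    (∫ x in s..t, f x * F x) ^ 2 ≤ M ^ 2 * ((d - c) * ∫ x in c..d, F x ^ 2) := by
  have hcd : c ≤ d := hs.1.trans hs.2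
  have hFi : IntervalIntegrable F volume c d := (uIcc_of_le hcd ▸ hF).intervalIntegrable
  have hfF : IntervalIntegrable (fun x => f x * F x) volume c d := by
    rw [intervalIntegrable_iff_integrableOn_Ioc_of_le hcd] at hFi ⊢
    exact hFi.bdd_mul hf.aestronglyMeasurable
      ((ae_restrict_iff' measurableSet_Ioc).2 <|
        .of_forall fun x hx => hbd x (Ioc_subset_Icc_self hx))
  have habs : |∫ x in s..t, f x * F x| ≤ M * ∫ x in c..d, |F x| := by
    rw [← intervalIntegral.integral_const_mul]
    refine (abs_intervalIntegral_le_integral_abs hfF hs ht).trans <|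
      integral_mono_on hcd hfF.abs (hFi.abs.const_mul M) fun x hx => ?_
    rw [abs_mul]
    exact mul_le_mul_of_nonneg_right (hbd x hx) (abs_nonneg _)
  calc (∫ x in s..t, f x * F x) ^ 2 = |∫ x in s..t, f x * F x| ^ 2 := (sq_abs _).symm
    _ ≤ M ^ 2 * (∫ x in c..d, |F x|) ^ 2 := by
      rw [← mul_pow]; exact pow_le_pow_left₀ (abs_nonneg _) habs 2
    _ ≤ M ^ 2 * ((d - c) * ∫ x in c..d, F x ^ 2) := by
      gcongr
      simpa only [sq_abs] using sq_intervalIntegral_le hF.abs hcd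

lemma sq_le_trace {f f' : ℝ → ℝ} {p q g : ℝ} (hf : ∀ x ∈ Icc p q, HasDerivAt f (f' x) x)
    (hf' : ContinuousOn f' (Icc p q)) (hpq : p < q) (hg : g ∈ Icc p q) :
    f g ^ 2 ≤ 2 / (q - p) * (∫ x in p..q, f x ^ 2) + (q - p) * ∫ x in p..q, f' x ^ 2 := by
  have hh : 0 < q - p := sub_pos.2 hpq
  have hIcc : uIcc p q = Icc p q := uIcc_of_le hpq.le
  have hfc : ContinuousOn f (Icc p q) := fun x hx => (hf x hx).continuousAt.continuousWithinAt
  have hu : ContinuousOn (fun x => 2 * f x * f' x) (Icc p q) :=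
    (continuousOn_const.mul hfc).mul hf'
  have hf2 : IntervalIntegrable (fun x => f x ^ 2) volume p q :=
    (hIcc ▸ hfc.pow 2).intervalIntegrable
  have hf'2 : IntervalIntegrable (fun x => f' x ^ 2) volume p q :=
    (hIcc ▸ hf'.pow 2).intervalIntegrable
  obtain ⟨t, ht, hmin⟩ := isCompact_Icc.exists_isMinOn (nonempty_Icc.2 hpq.le) (hfc.pow 2)
  have hft : f t ^ 2 ≤ 1 / (q - p) * ∫ x in p..q, f x ^ 2 := by
    have := integral_mono_on hpq.le intervalIntegrable_const hf2 fun x hx => hmin hx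
    rw [intervalIntegral.integral_const, smul_eq_mul, Pi.pow_apply] at this
    rw [one_div_mul_eq_div, le_div_iff₀ hh]
    linarith
  have hFTC : f g ^ 2 - f t ^ 2 = ∫ x in t..g, 2 * f x * f' x := by
    refine (integral_eq_sub_of_hasDerivAt (f := fun x => f x ^ 2) (fun x hx => ?_)
      ((hu.mono (uIcc_subset_Icc ht hg)).intervalIntegrable)).symm
    simpa [mul_comm, mul_left_comm, mul_assoc] using (hf x (uIcc_subset_Icc ht hg hx)).fun_pow 2
  have hamgm : ∀ x, |2 * f x * f' x| ≤ 1 / (q - p) * f x ^ 2 + (q - p) * f' x ^ 2 := by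
    intro x
    rw [one_div_mul_eq_div, div_add' _ _ _ hh.ne', le_div_iff₀ hh, abs_mul, abs_mul, abs_two]
    have h := sq_nonneg (|f x| - (q - p) * |f' x|)
    rw [sub_sq, mul_pow, sq_abs, sq_abs] at h
    nlinarith [h]
  have hcross : |∫ x in t..g, 2 * f x * f' x|
      ≤ 1 / (q - p) * (∫ x in p..q, f x ^ 2) + (q - p) * ∫ x in p..q, f' x ^ 2 := by
    rw [← intervalIntegral.integral_const_mul, ← intervalIntegral.integral_const_mul,
      ← integral_add (hf2.const_mul _) (hf'2.const_mul _)]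
    exact (abs_intervalIntegral_le_integral_abs (hIcc ▸ hu).intervalIntegrable ht hg).trans
      (integral_mono_on hpq.le (hIcc ▸ hu).intervalIntegrable.abs
        ((hf2.const_mul _).add (hf'2.const_mul _)) fun x _ => hamgm x)
  have h2 : 2 / (q - p) = 1 / (q - p) + 1 / (q - p) := by ring
  rw [h2, add_mul]
  linarith [le_abs_self (∫ x in t..g, 2 * f x * f' x)]

lemma hasDerivAt_pdx {F : ℝ × ℝ → ℝ} {x y : ℝ} (hF : DifferentiableAt ℝ F (x, y)) :
    HasDerivAt (fun s => F (s, y)) (pdx F (x, y)) x :=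
  hF.hasFDerivAt.comp_hasDerivAt x ((hasDerivAt_id x).prodMk (hasDerivAt_const x y))

lemma hasDerivAt_pdy {F : ℝ × ℝ → ℝ} {x y : ℝ} (hF : DifferentiableAt ℝ F (x, y)) :
    HasDerivAt (fun t => F (x, t)) (pdy F (x, y)) y :=
  hF.hasFDerivAt.comp_hasDerivAt y ((hasDerivAt_const y x).prodMk (hasDerivAt_id y))

lemma ContDiff.pdx {F : ℝ × ℝ → ℝ} {m n : WithTop ℕ∞} (hF : ContDiff ℝ n F)
    (hmn : m + 1 ≤ n) : ContDiff ℝ m (pdx F) :=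
  (hF.fderiv_right hmn).clm_apply contDiff_const

lemma ContDiff.pdy {F : ℝ × ℝ → ℝ} {m n : WithTop ℕ∞} (hF : ContDiff ℝ n F)
    (hmn : m + 1 ≤ n) : ContDiff ℝ m (pdy F) :=
  (hF.fderiv_right hmn).clm_apply contDiff_const

lemma setIntegral_Icc_prod_Icc {f : ℝ × ℝ → ℝ} (hf : Continuous f) {p q c d : ℝ}
    (hpq : p ≤ q) (hcd : c ≤ d) :
    ∫ z in Icc p q ×ˢ Icc c d, f z = ∫ x in p..q, ∫ y in c..d, f (x, y) := by
  have hint : IntegrableOn f (Icc p q ×ˢ Icc c d) :=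
    hf.continuousOn.integrableOn_compact (isCompact_Icc.prod isCompact_Icc)
  rw [Measure.volume_eq_prod] at hint ⊢
  simp only [setIntegral_prod _ hint, integral_of_le hpq, integral_of_le hcd,
    integral_Icc_eq_integral_Ioc]

lemma setIntegral_Icc_prod_Icc' {f : ℝ × ℝ → ℝ} (hf : Continuous f) {p q c d : ℝ}
    (hpq : p ≤ q) (hcd : c ≤ d) :
    ∫ z in Icc p q ×ˢ Icc c d, f z = ∫ y in c..d, ∫ x in p..q, f (x, y) := by
  have := setIntegral_Icc_prod_Icc (hf.comp continuous_swap) hcd hpq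
  rw [Measure.volume_eq_prod, Function.comp_def, setIntegral_prod_swap] at this
  rw [Measure.volume_eq_prod, this]
  rfl

lemma integral_sq_le_trace_fst {F : ℝ × ℝ → ℝ} (hF : ContDiff ℝ 1 F) {p q c d g : ℝ}
    (hpq : p < q) (hcd : c ≤ d) (hg : g ∈ Icc p q) :
    ∫ y in c..d, F (g, y) ^ 2 ≤ 2 / (q - p) * (∫ z in Icc p q ×ˢ Icc c d, F z ^ 2) +
      (q - p) * ∫ z in Icc p q ×ˢ Icc c d, pdx F z ^ 2 := by
  have hFc : Continuous F := hF.continuous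
  have hF'c : Continuous (pdx F) := (hF.pdx (m := 0) le_rfl).continuous
  have hpt : ∀ y, F (g, y) ^ 2 ≤ 2 / (q - p) * (∫ x in p..q, F (x, y) ^ 2) +
      (q - p) * ∫ x in p..q, pdx F (x, y) ^ 2 := fun y =>
    sq_le_trace (f := fun x => F (x, y))
      (fun x _ => hasDerivAt_pdx (hF.differentiable one_ne_zero _)) (by fun_prop) hpq hg
  have h1 : Continuous fun y => ∫ x in p..q, F (x, y) ^ 2 :=
    continuous_parametric_intervalIntegral_of_continuous' (by fun_prop) _ _
  have h2 : Continuous fun y => ∫ x in p..q, pdx F (x, y) ^ 2 :=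
    continuous_parametric_intervalIntegral_of_continuous' (by fun_prop) _ _
  rw [setIntegral_Icc_prod_Icc' (by fun_prop) hpq.le hcd,
    setIntegral_Icc_prod_Icc' (by fun_prop) hpq.le hcd, ← intervalIntegral.integral_const_mul,
    ← intervalIntegral.integral_const_mul, ← integral_add ((h1.intervalIntegrable c d).const_mul _)
      ((h2.intervalIntegrable c d).const_mul _)]
  exact integral_mono_on hcd
    ((by fun_prop : Continuous fun y => F (g, y) ^ 2).intervalIntegrable _ _)
    (((h1.intervalIntegrable c d).const_mul _).add ((h2.intervalIntegrable c d).const_mul _))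
    fun y _ => hpt y

lemma integral_sq_le_trace_snd {F : ℝ × ℝ → ℝ} (hF : ContDiff ℝ 1 F) {p q c d g : ℝ}
    (hpq : p ≤ q) (hcd : c < d) (hg : g ∈ Icc c d) :
    ∫ x in p..q, F (x, g) ^ 2 ≤ 2 / (d - c) * (∫ z in Icc p q ×ˢ Icc c d, F z ^ 2) +
      (d - c) * ∫ z in Icc p q ×ˢ Icc c d, pdy F z ^ 2 := by
  have hFc : Continuous F := hF.continuous
  have hF'c : Continuous (pdy F) := (hF.pdy (m := 0) le_rfl).continuous
  have hpt : ∀ x, F (x, g) ^ 2 ≤ 2 / (d - c) * (∫ y in c..d, F (x, y) ^ 2) +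
      (d - c) * ∫ y in c..d, pdy F (x, y) ^ 2 := fun x =>
    sq_le_trace (f := fun y => F (x, y))
      (fun y _ => hasDerivAt_pdy (hF.differentiable one_ne_zero _)) (by fun_prop) hcd hg
  have h1 : Continuous fun x => ∫ y in c..d, F (x, y) ^ 2 :=
    continuous_parametric_intervalIntegral_of_continuous' (by fun_prop) _ _
  have h2 : Continuous fun x => ∫ y in c..d, pdy F (x, y) ^ 2 :=
    continuous_parametric_intervalIntegral_of_continuous' (by fun_prop) _ _
  rw [setIntegral_Icc_prod_Icc (by fun_prop) hpq hcd.le,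
    setIntegral_Icc_prod_Icc (by fun_prop) hpq hcd.le, ← intervalIntegral.integral_const_mul,
    ← intervalIntegral.integral_const_mul, ← integral_add ((h1.intervalIntegrable p q).const_mul _)
      ((h2.intervalIntegrable p q).const_mul _)]
  exact integral_mono_on hpq
    ((by fun_prop : Continuous fun x => F (x, g) ^ 2).intervalIntegrable _ _)
    (((h1.intervalIntegrable p q).const_mul _).add ((h2.intervalIntegrable p q).const_mul _))
    fun x _ => hpt x

lemma add_add_sub_mul_div_two_mem_Icc {u v g : ℝ} (huv : u ≤ v) (hg : g ∈ Ioo (-1 : ℝ) 1) :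
    (v + u + (v - u) * g) / 2 ∈ Icc u v := by
  constructor <;> nlinarith [hg.1, hg.2]

namespace RectPartition

variable {a b c d : ℝ} (P : RectPartition a b c d)

def transpose : RectPartition c d a b where
  m := P.n
  n := P.m
  hm := P.hn
  hn := P.hm
  x := P.y
  y := P.x
  hxa := P.hyc
  hxb := P.hyd
  hyc := P.hxa
  hyd := P.hxb
  hxlt := P.hylt
  hylt := P.hxlt

lemma strictMonoOn_x : StrictMonoOn P.x (Iic P.m) :=
  strictMonoOn_Iic_of_lt_succ fun i hi => by simpa using P.hxlt i hi

lemma x_mem_Icc {i : ℕ} (hi : i ≤ P.m) : P.x i ∈ Icc a b := by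
  have hmono := P.strictMonoOn_x.monotoneOn
  exact ⟨P.hxa.symm.le.trans (hmono (Nat.zero_le _) hi (Nat.zero_le _)),
    (hmono hi (le_refl P.m) hi).trans P.hxb.le⟩

lemma y_mem_Icc {j : ℕ} (hj : j ≤ P.n) : P.y j ∈ Icc c d := P.transpose.x_mem_Icc hj

lemma hx_pos {i : ℕ} (hi : i ∈ Finset.Icc 1 P.m) : 0 < P.hx i := by
  obtain ⟨hi1, hi2⟩ := Finset.mem_Icc.1 hi
  have := P.hxlt (i - 1) (by omega)
  rw [Nat.sub_add_cancel hi1] at this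
  exact sub_pos.2 this

lemma hy_pos {j : ℕ} (hj : j ∈ Finset.Icc 1 P.n) : 0 < P.hy j := P.transpose.hx_pos hj

lemma cell_subset_dom {i j : ℕ} (hi : i ∈ Finset.Icc 1 P.m) (hj : j ∈ Finset.Icc 1 P.n) :
    P.cell i j ⊆ P.dom := by
  obtain ⟨hi1, hi2⟩ := Finset.mem_Icc.1 hi
  obtain ⟨hj1, hj2⟩ := Finset.mem_Icc.1 hj
  exact prod_mono
    (Icc_subset_Icc (P.x_mem_Icc (by omega)).1 (P.x_mem_Icc hi2).2)
    (Icc_subset_Icc (P.y_mem_Icc (by omega)).1 (P.y_mem_Icc hj2).2)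

lemma integrableOn_cell {f : ℝ × ℝ → ℝ} (hf : Continuous f) (i j : ℕ) :
    IntegrableOn f (P.cell i j) :=
  hf.continuousOn.integrableOn_compact (isCompact_Icc.prod isCompact_Icc)

lemma hx_mem_sides {i : ℕ} (hi : i ∈ Finset.Icc 1 P.m) : P.hx i ∈ P.sides :=
  Finset.mem_union_left _ (Finset.mem_image_of_mem _ hi)

lemma hy_mem_sides {j : ℕ} (hj : j ∈ Finset.Icc 1 P.n) : P.hy j ∈ P.sides :=
  Finset.mem_union_right _ (Finset.mem_image_of_mem _ hj)

variable {P} {r : ℕ} {G : ℕ → ℝ}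

lemma gx_mem_Icc (hG : IsGaussPoints r G) {i k : ℕ} (hi : i ∈ Finset.Icc 1 P.m)
    (hk : k ∈ Finset.Icc 1 r) : P.gx r G i k ∈ Icc (P.x (i - 1)) (P.x i) := by
  obtain ⟨hk1, hk2⟩ := Finset.mem_Icc.1 hk
  rw [gx, if_neg (by omega)]
  exact add_add_sub_mul_div_two_mem_Icc (sub_nonneg.1 (P.hx_pos hi).le) (hG.2 k hk1 hk2).1

lemma x_le_gx_top {i : ℕ} (hG : IsGaussPoints r G) (hr : 1 ≤ r) (hi : i ≤ P.m) :
    P.x i ≤ P.gx r G i (r + 1) := by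
  rw [gx, if_pos rfl]
  split_ifs with him
  · rw [him]
  · exact (add_add_sub_mul_div_two_mem_Icc (P.hxlt i (by omega)).le (hG.2 1 le_rfl hr).1).1

lemma gx_top_le {i : ℕ} (hG : IsGaussPoints r G) (hr : 1 ≤ r) (hi : i < P.m) :
    P.gx r G i (r + 1) ≤ P.x (i + 1) := by
  rw [gx, if_pos rfl, if_neg hi.ne]
  exact (add_add_sub_mul_div_two_mem_Icc (P.hxlt i hi).le (hG.2 1 le_rfl hr).1).2

lemma gx_top_last : P.gx r G P.m (r + 1) = P.x P.m := by
  simp [gx]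

lemma min_gx_succ_mem_Icc (hG : IsGaussPoints r G) {i k : ℕ} (hi : i ∈ Finset.Icc 1 P.m)
    (hk : k ∈ Finset.Icc 1 r) :
    min (P.gx r G i (k + 1)) (P.x i) ∈ Icc (P.x (i - 1)) (P.x i) := by
  obtain ⟨hk1, hk2⟩ := Finset.mem_Icc.1 hk
  rcases hk2.lt_or_eq with hkr | rfl
  · have h := gx_mem_Icc hG hi (Finset.mem_Icc.2 ⟨by omega, hkr⟩)
    exact ⟨le_min h.1 (h.1.trans h.2), min_le_right _ _⟩
  · rw [min_eq_right (x_le_gx_top hG hk1 (Finset.mem_Icc.1 hi).2)]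
    exact ⟨sub_nonneg.1 (P.hx_pos hi).le, le_rfl⟩

lemma max_gx_succ_mem_Icc (hG : IsGaussPoints r G) {i k : ℕ} (hi : i ∈ Finset.Icc 1 P.m)
    (him : i < P.m) (hk : k ∈ Finset.Icc 1 r) :
    max (P.gx r G i (k + 1)) (P.x i) ∈ Icc (P.x i) (P.x (i + 1)) := by
  obtain ⟨hk1, hk2⟩ := Finset.mem_Icc.1 hk
  rcases hk2.lt_or_eq with hkr | rfl
  · rw [max_eq_right (gx_mem_Icc hG hi (Finset.mem_Icc.2 ⟨by omega, hkr⟩)).2]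
    exact ⟨le_rfl, (P.hxlt i him).le⟩
  · rw [max_eq_left (x_le_gx_top hG hk1 him.le)]
    exact ⟨x_le_gx_top hG hk1 him.le, gx_top_le hG hk1 him⟩

lemma max_gx_succ_last (hG : IsGaussPoints r G) {k : ℕ} (hk : k ∈ Finset.Icc 1 r) :
    max (P.gx r G P.m (k + 1)) (P.x P.m) = P.x P.m := by
  obtain ⟨hk1, hk2⟩ := Finset.mem_Icc.1 hk
  rcases hk2.lt_or_eq with hkr | rfl
  · exact max_eq_right (gx_mem_Icc hG (Finset.mem_Icc.2 ⟨P.hm, le_rfl⟩)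
      (Finset.mem_Icc.2 ⟨by omega, hkr⟩)).2
  · rw [gx_top_last, max_self]

lemma gy_mem_Icc (hG : IsGaussPoints r G) {j l : ℕ} (hj : j ∈ Finset.Icc 1 P.n)
    (hl : l ∈ Finset.Icc 1 r) : P.gy r G j l ∈ Icc (P.y (j - 1)) (P.y j) :=
  gx_mem_Icc (P := P.transpose) hG hj hl

lemma min_gy_succ_mem_Icc (hG : IsGaussPoints r G) {j l : ℕ} (hj : j ∈ Finset.Icc 1 P.n)
    (hl : l ∈ Finset.Icc 1 r) :
    min (P.gy r G j (l + 1)) (P.y j) ∈ Icc (P.y (j - 1)) (P.y j) :=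
  min_gx_succ_mem_Icc (P := P.transpose) hG hj hl

lemma max_gy_succ_mem_Icc (hG : IsGaussPoints r G) {j l : ℕ} (hj : j ∈ Finset.Icc 1 P.n)
    (hjn : j < P.n) (hl : l ∈ Finset.Icc 1 r) :
    max (P.gy r G j (l + 1)) (P.y j) ∈ Icc (P.y j) (P.y (j + 1)) :=
  max_gx_succ_mem_Icc (P := P.transpose) hG hj hjn hl

lemma max_gy_succ_last (hG : IsGaussPoints r G) {l : ℕ} (hl : l ∈ Finset.Icc 1 r) :
    max (P.gy r G P.n (l + 1)) (P.y P.n) = P.y P.n :=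
  max_gx_succ_last (P := P.transpose) hG hl

end RectPartition

lemma mul_trace_bound_le {h₁ h₂ σ E₁ E₂ A₁ A₂ : ℝ} (hσ : 1 ≤ σ) (h₁_pos : 0 < h₁)
    (hq : h₂ ≤ σ * h₁) (hE₁ : 0 ≤ E₁) (hE₂ : 0 ≤ E₂) (hEA₁ : E₁ ≤ A₁) (hEA₂ : E₂ ≤ A₂) :
    h₂ * (2 / h₁ * E₁ + h₁ * E₂) ≤ 2 * σ * (A₁ + (h₁ ^ 2 + h₂ ^ 2) * A₂) := by
  have hw : h₂ * (2 / h₁) ≤ 2 * σ := by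
    rw [mul_div_assoc', div_le_iff₀ h₁_pos]; linarith
  have h1 : h₂ * (2 / h₁) * E₁ ≤ 2 * σ * A₁ :=
    (mul_le_mul_of_nonneg_right hw hE₁).trans (mul_le_mul_of_nonneg_left hEA₁ (by positivity))
  have h2 : h₂ * h₁ * E₂ ≤ 2 * σ * ((h₁ ^ 2 + h₂ ^ 2) * A₂) := by
    have : h₂ * h₁ ≤ 2 * σ * (h₁ ^ 2 + h₂ ^ 2) := by nlinarith [sq_nonneg (h₁ - h₂)]
    calc h₂ * h₁ * E₂ ≤ 2 * σ * (h₁ ^ 2 + h₂ ^ 2) * E₂ := mul_le_mul_of_nonneg_right this hE₂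
      _ ≤ 2 * σ * (h₁ ^ 2 + h₂ ^ 2) * A₂ := mul_le_mul_of_nonneg_left hEA₂ (by positivity)
      _ = _ := by ring
  linarith

noncomputable def cellEnergy {a b c d : ℝ} (P : RectPartition a b c d) (v : PiecewiseFun P)
    (i j : ℕ) : ℝ :=
  (∫ z in P.cell i j, ((cellDx v i j z) ^ 2 + (cellDy v i j z) ^ 2)) +
    (P.hx i ^ 2 + P.hy j ^ 2) *
      ∫ z in P.cell i j,
        ((pdx (pdx (v.cellFun i j)) z) ^ 2 + 2 * (pdy (pdx (v.cellFun i j)) z) ^ 2 +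
          (pdy (pdy (v.cellFun i j)) z) ^ 2)

lemma cellEnergy_nonneg {a b c d : ℝ} {P : RectPartition a b c d} (v : PiecewiseFun P)
    (i j : ℕ) : 0 ≤ cellEnergy P v i j := by
  have hmeas : MeasurableSet (P.cell i j) := measurableSet_Icc.prod measurableSet_Icc
  exact add_nonneg (setIntegral_nonneg hmeas fun _ _ => by positivity)
    (mul_nonneg (by positivity) (setIntegral_nonneg hmeas fun _ _ => by positivity))

lemma sq_semiP {a b c d : ℝ} (P : RectPartition a b c d) (v : PiecewiseFun P) :
    semiP P v ^ 2 = ∑ i ∈ Finset.Icc 1 P.m, ∑ j ∈ Finset.Icc 1 P.n, cellEnergy P v i j :=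
  Real.sq_sqrt (Finset.sum_nonneg fun i _ => Finset.sum_nonneg fun j _ => cellEnergy_nonneg v i j)

section CellBounds

variable {a b c d σ M : ℝ} {P : RectPartition a b c d} {α : ℝ × ℝ → ℝ} {v : PiecewiseFun P}
  {i j : ℕ}

lemma sq_integral_mul_cellDx_le (hσ : 1 ≤ σ) (hP : P.QuasiUniform σ) (hα : Measurable α)
    (hbd : ∀ z ∈ P.dom, |α z| ≤ M) (hv : ContDiff ℝ 2 (v.cellFun i j))
    (hi : i ∈ Finset.Icc 1 P.m) (hj : j ∈ Finset.Icc 1 P.n) {g s t : ℝ}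
    (hg : g ∈ Icc (P.x (i - 1)) (P.x i)) (hs : s ∈ Icc (P.y (j - 1)) (P.y j))
    (ht : t ∈ Icc (P.y (j - 1)) (P.y j)) :
    (∫ y in s..t, α (g, y) * cellDx v i j (g, y)) ^ 2 ≤ 2 * σ * M ^ 2 * cellEnergy P v i j := by
  have hDx : ContDiff ℝ 1 (cellDx v i j) := hv.pdx (by norm_num)
  have hDy : Continuous (cellDy v i j) := (hv.pdy (m := 1) (by norm_num)).continuous
  have hxx : Continuous (pdx (pdx (v.cellFun i j))) := (hDx.pdx (m := 0) le_rfl).continuous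
  have hxy : Continuous (pdy (pdx (v.cellFun i j))) := (hDx.pdy (m := 0) le_rfl).continuous
  have hyy : Continuous (pdy (pdy (v.cellFun i j))) :=
    ((hv.pdy (m := 1) (by norm_num)).pdy (m := 0) le_rfl).continuous
  have hline := sq_intervalIntegral_mul_le (hα.comp measurable_prodMk_left)
    (hDx.continuous.comp (Continuous.prodMk_right g)).continuousOn
    (fun y hy => hbd _ (P.cell_subset_dom hi hj ⟨hg, hy⟩)) hs ht
  have htrace := integral_sq_le_trace_fst hDx (sub_pos.1 (P.hx_pos hi))
    (sub_nonneg.1 (P.hy_pos hj).le) hg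
  have hE₁ : ∫ z in P.cell i j, cellDx v i j z ^ 2
      ≤ ∫ z in P.cell i j, (cellDx v i j z ^ 2 + cellDy v i j z ^ 2) :=
    setIntegral_mono (P.integrableOn_cell (by fun_prop) i j)
      (P.integrableOn_cell (by fun_prop) i j) fun z => by nlinarith [sq_nonneg (cellDy v i j z)]
  have hE₂ : ∫ z in P.cell i j, pdx (pdx (v.cellFun i j)) z ^ 2
      ≤ ∫ z in P.cell i j, (pdx (pdx (v.cellFun i j)) z ^ 2 +
          2 * pdy (pdx (v.cellFun i j)) z ^ 2 + pdy (pdy (v.cellFun i j)) z ^ 2) :=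
    setIntegral_mono (P.integrableOn_cell (by fun_prop) i j)
      (P.integrableOn_cell (by fun_prop) i j) fun z => by
        nlinarith [sq_nonneg (pdy (pdx (v.cellFun i j)) z), sq_nonneg (pdy (pdy (v.cellFun i j)) z)]
  have hbound := mul_trace_bound_le hσ (P.hx_pos hi)
    (hP _ (P.hy_mem_sides hj) _ (P.hx_mem_sides hi))
    (setIntegral_nonneg (measurableSet_Icc.prod measurableSet_Icc) fun z _ => sq_nonneg _)
    (setIntegral_nonneg (measurableSet_Icc.prod measurableSet_Icc) fun z _ => sq_nonneg _) hE₁ hE₂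
  calc _ ≤ M ^ 2 * (P.hy j * ∫ y in P.y (j - 1)..P.y j, cellDx v i j (g, y) ^ 2) := hline
    _ ≤ M ^ 2 * (P.hy j * (2 / P.hx i * (∫ z in P.cell i j, cellDx v i j z ^ 2) +
          P.hx i * ∫ z in P.cell i j, pdx (cellDx v i j) z ^ 2)) := by
      gcongr
      · exact (P.hy_pos hj).le
      · exact htrace
    _ ≤ M ^ 2 * (2 * σ * cellEnergy P v i j) := mul_le_mul_of_nonneg_left hbound (sq_nonneg M)
    _ = 2 * σ * M ^ 2 * cellEnergy P v i j := by ring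

lemma sq_integral_mul_cellDy_le (hσ : 1 ≤ σ) (hP : P.QuasiUniform σ) (hα : Measurable α)
    (hbd : ∀ z ∈ P.dom, |α z| ≤ M) (hv : ContDiff ℝ 2 (v.cellFun i j))
    (hi : i ∈ Finset.Icc 1 P.m) (hj : j ∈ Finset.Icc 1 P.n) {g s t : ℝ}
    (hg : g ∈ Icc (P.y (j - 1)) (P.y j)) (hs : s ∈ Icc (P.x (i - 1)) (P.x i))
    (ht : t ∈ Icc (P.x (i - 1)) (P.x i)) :
    (∫ x in s..t, α (x, g) * cellDy v i j (x, g)) ^ 2 ≤ 2 * σ * M ^ 2 * cellEnergy P v i j := by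
  have hDy : ContDiff ℝ 1 (cellDy v i j) := hv.pdy (by norm_num)
  have hDx : Continuous (cellDx v i j) := (hv.pdx (m := 1) (by norm_num)).continuous
  have hxx : Continuous (pdx (pdx (v.cellFun i j))) :=
    ((hv.pdx (m := 1) (by norm_num)).pdx (m := 0) le_rfl).continuous
  have hxy : Continuous (pdy (pdx (v.cellFun i j))) :=
    ((hv.pdx (m := 1) (by norm_num)).pdy (m := 0) le_rfl).continuous
  have hyy : Continuous (pdy (pdy (v.cellFun i j))) := (hDy.pdy (m := 0) le_rfl).continuous
  have hline := sq_intervalIntegral_mul_le (hα.comp measurable_prodMk_right)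
    (hDy.continuous.comp (Continuous.prodMk_left g)).continuousOn
    (fun x hx => hbd _ (P.cell_subset_dom hi hj ⟨hx, hg⟩)) hs ht
  have htrace := integral_sq_le_trace_snd hDy (sub_nonneg.1 (P.hx_pos hi).le)
    (sub_pos.1 (P.hy_pos hj)) hg
  have hE₁ : ∫ z in P.cell i j, cellDy v i j z ^ 2
      ≤ ∫ z in P.cell i j, (cellDx v i j z ^ 2 + cellDy v i j z ^ 2) :=
    setIntegral_mono (P.integrableOn_cell (by fun_prop) i j)
      (P.integrableOn_cell (by fun_prop) i j) fun z => by nlinarith [sq_nonneg (cellDx v i j z)]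
  have hE₂ : ∫ z in P.cell i j, pdy (pdy (v.cellFun i j)) z ^ 2
      ≤ ∫ z in P.cell i j, (pdx (pdx (v.cellFun i j)) z ^ 2 +
          2 * pdy (pdx (v.cellFun i j)) z ^ 2 + pdy (pdy (v.cellFun i j)) z ^ 2) :=
    setIntegral_mono (P.integrableOn_cell (by fun_prop) i j)
      (P.integrableOn_cell (by fun_prop) i j) fun z => by
        nlinarith [sq_nonneg (pdx (pdx (v.cellFun i j)) z), sq_nonneg (pdy (pdx (v.cellFun i j)) z)]
  have hbound := mul_trace_bound_le hσ (P.hy_pos hj)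
    (hP _ (P.hx_mem_sides hi) _ (P.hy_mem_sides hj))
    (setIntegral_nonneg (measurableSet_Icc.prod measurableSet_Icc) fun z _ => sq_nonneg _)
    (setIntegral_nonneg (measurableSet_Icc.prod measurableSet_Icc) fun z _ => sq_nonneg _) hE₁ hE₂
  rw [add_comm (P.hy j ^ 2)] at hbound
  calc _ ≤ M ^ 2 * (P.hx i * ∫ x in P.x (i - 1)..P.x i, cellDy v i j (x, g) ^ 2) := hline
    _ ≤ M ^ 2 * (P.hx i * (2 / P.hy j * (∫ z in P.cell i j, cellDy v i j z ^ 2) +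
          P.hy j * ∫ z in P.cell i j, pdy (cellDy v i j) z ^ 2)) := by
      gcongr
      · exact (P.hx_pos hi).le
      · exact htrace
    _ ≤ M ^ 2 * (2 * σ * cellEnergy P v i j) := mul_le_mul_of_nonneg_left hbound (sq_nonneg M)
    _ = 2 * σ * M ^ 2 * cellEnergy P v i j := by ring

end CellBounds

/-- `∫_{g^y_{j,l}}^{g^y_{j,l+1}} α (g^x_{i,k}, y) ∂v/∂x (g^x_{i,k}, y) dy`, the integral
being split at `y = y_j` between the cells `τ_{i,j}` and `τ_{i,j+1}` (as in `aP`). -/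
noncomputable def gaussFluxX {a b c d : ℝ} (r : ℕ) (G : ℕ → ℝ) (P : RectPartition a b c d)
    (α : ℝ × ℝ → ℝ) (Dxv : ℕ → ℕ → ℝ × ℝ → ℝ) (i k j l : ℕ) : ℝ :=
  (∫ t in (P.gy r G j l)..(min (P.gy r G j (l + 1)) (P.y j)),
      α (P.gx r G i k, t) * Dxv i j (P.gx r G i k, t)) +
    ∫ t in (P.y j)..(max (P.gy r G j (l + 1)) (P.y j)),
      α (P.gx r G i k, t) * Dxv i (j + 1) (P.gx r G i k, t)

noncomputable def gaussFluxY {a b c d : ℝ} (r : ℕ) (G : ℕ → ℝ) (P : RectPartition a b c d)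
    (α : ℝ × ℝ → ℝ) (Dyv : ℕ → ℕ → ℝ × ℝ → ℝ) (i k j l : ℕ) : ℝ :=
  (∫ t in (P.gx r G i k)..(min (P.gx r G i (k + 1)) (P.x i)),
      α (t, P.gy r G j l) * Dyv i j (t, P.gy r G j l)) +
    ∫ t in (P.x i)..(max (P.gx r G i (k + 1)) (P.x i)),
      α (t, P.gy r G j l) * Dyv (i + 1) j (t, P.gy r G j l)

lemma aP_eq {a b c d : ℝ} (r : ℕ) (G : ℕ → ℝ) (P : RectPartition a b c d)
    (α : ℝ × ℝ → ℝ) (Dxv Dyv : ℕ → ℕ → ℝ × ℝ → ℝ) (w : ℕ → ℕ → ℕ → ℕ → ℝ) :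
    aP r G P α Dxv Dyv w =
      (∑ q ∈ idxX r P, jumpX r w q.1 q.2.1 q.2.2.1 q.2.2.2 *
        gaussFluxX r G P α Dxv q.1 q.2.1 q.2.2.1 q.2.2.2) +
      ∑ q ∈ idxY r P, jumpY r w q.1 q.2.1 q.2.2.1 q.2.2.2 *
        gaussFluxY r G P α Dyv q.1 q.2.1 q.2.2.1 q.2.2.2 :=
  rfl

section FluxBounds

variable {a b c d σ M : ℝ} {r : ℕ} {G : ℕ → ℝ} {P : RectPartition a b c d}
  {α : ℝ × ℝ → ℝ} {v : PiecewiseFun P}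

lemma sq_gaussFluxX_le (hG : IsGaussPoints r G) (hσ : 1 ≤ σ) (hP : P.QuasiUniform σ)
    (hα : Measurable α) (hbd : ∀ z ∈ P.dom, |α z| ≤ M) (hv : CellSmooth P 2 v) {i k j l : ℕ}
    (hi : i ∈ Finset.Icc 1 P.m) (hk : k ∈ Finset.Icc 1 r) (hj : j ∈ Finset.Icc 1 P.n)
    (hl : l ∈ Finset.Icc 1 r) :
    gaussFluxX r G P α (cellDx v) i k j l ^ 2 ≤ 4 * σ * M ^ 2 *
      (cellEnergy P v i j + if j = P.n then 0 else cellEnergy P v i (j + 1)) := by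
  have hg := RectPartition.gx_mem_Icc hG hi hk
  set A := ∫ t in (P.gy r G j l)..(min (P.gy r G j (l + 1)) (P.y j)),
    α (P.gx r G i k, t) * cellDx v i j (P.gx r G i k, t)
  set B := ∫ t in (P.y j)..(max (P.gy r G j (l + 1)) (P.y j)),
    α (P.gx r G i k, t) * cellDx v i (j + 1) (P.gx r G i k, t)
  have hA : A ^ 2 ≤ 2 * σ * M ^ 2 * cellEnergy P v i j :=
    sq_integral_mul_cellDx_le hσ hP hα hbd (hv i hi j hj) hi hj hg
      (RectPartition.gy_mem_Icc hG hj hl) (RectPartition.min_gy_succ_mem_Icc hG hj hl)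
  have hB : B ^ 2 ≤ 2 * σ * M ^ 2 * if j = P.n then 0 else cellEnergy P v i (j + 1) := by
    split_ifs with hjn
    · subst hjn
      simp [B, RectPartition.max_gy_succ_last hG hl]
    · have hjn' : j < P.n := lt_of_le_of_ne (Finset.mem_Icc.1 hj).2 hjn
      have hj' : j + 1 ∈ Finset.Icc 1 P.n := Finset.mem_Icc.2 ⟨by omega, hjn'⟩
      exact sq_integral_mul_cellDx_le hσ hP hα hbd (hv i hi (j + 1) hj') hi hj' hg
        (left_mem_Icc.2 (P.hylt j hjn').le) (RectPartition.max_gy_succ_mem_Icc hG hj hjn' hl)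
  change (A + B) ^ 2 ≤ _
  nlinarith [sq_nonneg (A - B)]

lemma sq_gaussFluxY_le (hG : IsGaussPoints r G) (hσ : 1 ≤ σ) (hP : P.QuasiUniform σ)
    (hα : Measurable α) (hbd : ∀ z ∈ P.dom, |α z| ≤ M) (hv : CellSmooth P 2 v) {i k j l : ℕ}
    (hi : i ∈ Finset.Icc 1 P.m) (hk : k ∈ Finset.Icc 1 r) (hj : j ∈ Finset.Icc 1 P.n)
    (hl : l ∈ Finset.Icc 1 r) :
    gaussFluxY r G P α (cellDy v) i k j l ^ 2 ≤ 4 * σ * M ^ 2 *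
      (cellEnergy P v i j + if i = P.m then 0 else cellEnergy P v (i + 1) j) := by
  have hg := RectPartition.gy_mem_Icc hG hj hl
  set A := ∫ t in (P.gx r G i k)..(min (P.gx r G i (k + 1)) (P.x i)),
    α (t, P.gy r G j l) * cellDy v i j (t, P.gy r G j l)
  set B := ∫ t in (P.x i)..(max (P.gx r G i (k + 1)) (P.x i)),
    α (t, P.gy r G j l) * cellDy v (i + 1) j (t, P.gy r G j l)
  have hA : A ^ 2 ≤ 2 * σ * M ^ 2 * cellEnergy P v i j :=
    sq_integral_mul_cellDy_le hσ hP hα hbd (hv i hi j hj) hi hj hg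
      (RectPartition.gx_mem_Icc hG hi hk) (RectPartition.min_gx_succ_mem_Icc hG hi hk)
  have hB : B ^ 2 ≤ 2 * σ * M ^ 2 * if i = P.m then 0 else cellEnergy P v (i + 1) j := by
    split_ifs with him
    · subst him
      simp [B, RectPartition.max_gx_succ_last hG hk]
    · have him' : i < P.m := lt_of_le_of_ne (Finset.mem_Icc.1 hi).2 him
      have hi' : i + 1 ∈ Finset.Icc 1 P.m := Finset.mem_Icc.2 ⟨by omega, him'⟩
      exact sq_integral_mul_cellDy_le hσ hP hα hbd (hv (i + 1) hi' j hj) hi' hj hg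
        (left_mem_Icc.2 (P.hxlt i him').le) (RectPartition.max_gx_succ_mem_Icc hG hi him' hk)
  change (A + B) ^ 2 ≤ _
  nlinarith [sq_nonneg (A - B)]

end FluxBounds

lemma sum_ite_succ_le {f : ℕ → ℝ} {n : ℕ} (hf : ∀ j ∈ Finset.Icc 1 n, 0 ≤ f j) :
    ∑ j ∈ Finset.Icc 1 n, (if j = n then 0 else f (j + 1)) ≤ ∑ j ∈ Finset.Icc 1 n, f j := by
  have hfilter : (Finset.Icc 1 n).filter (fun j => ¬j = n) = Finset.Ico 1 n := by
    ext j; simp only [Finset.mem_filter, Finset.mem_Icc, Finset.mem_Ico]; omega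
  have hite : ∀ j, (if j = n then 0 else f (j + 1)) = if ¬j = n then f (j + 1) else 0 :=
    fun j => (ite_not _ _ _).symm
  rw [Finset.sum_congr rfl fun j _ => hite j, ← Finset.sum_filter, hfilter, Finset.sum_Ico_add']
  exact Finset.sum_le_sum_of_subset_of_nonneg
    (fun j hj => by simp only [Finset.mem_Ico, Finset.mem_Icc] at hj ⊢; omega)
    fun j hj _ => hf j hj

lemma sum_prod_prod_prod_eq (I K J L : Finset ℕ) (f : ℕ → ℕ → ℝ) :
    ∑ q ∈ I ×ˢ K ×ˢ J ×ˢ L, f q.1 q.2.2.1 = K.card * L.card * ∑ i ∈ I, ∑ j ∈ J, f i j := by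
  simp only [Finset.sum_product, Finset.sum_const, nsmul_eq_mul, Finset.mul_sum]
  exact Finset.sum_congr rfl fun i _ => Finset.sum_congr rfl fun j _ => by ring

lemma sum_sum_add_ite_succ_le {E : ℕ → ℕ → ℝ} (hE : ∀ i j, 0 ≤ E i j) (m n : ℕ) :
    ∑ i ∈ Finset.Icc 1 m, ∑ j ∈ Finset.Icc 1 n, (E i j + if j = n then 0 else E i (j + 1)) ≤
      2 * ∑ i ∈ Finset.Icc 1 m, ∑ j ∈ Finset.Icc 1 n, E i j := by
  rw [Finset.mul_sum]
  gcongr with i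
  rw [Finset.sum_add_distrib]
  linarith [sum_ite_succ_le (f := E i) (n := n) fun j _ => hE i j]

section FluxSums

variable {a b c d σ M : ℝ} {r : ℕ} {G : ℕ → ℝ} {P : RectPartition a b c d}
  {α : ℝ × ℝ → ℝ} {v : PiecewiseFun P}

lemma sum_sq_gaussFluxX_le (hG : IsGaussPoints r G) (hσ : 1 ≤ σ) (hP : P.QuasiUniform σ)
    (hα : Measurable α) (hbd : ∀ z ∈ P.dom, |α z| ≤ M) (hv : CellSmooth P 2 v) :
    ∑ q ∈ idxX r P, gaussFluxX r G P α (cellDx v) q.1 q.2.1 q.2.2.1 q.2.2.2 ^ 2 ≤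
      8 * σ * r ^ 2 * M ^ 2 * semiP P v ^ 2 := by
  set E := cellEnergy P v
  calc _ ≤ ∑ q ∈ Finset.Icc 1 P.m ×ˢ Finset.Icc 1 r ×ˢ Finset.Icc 1 P.n ×ˢ Finset.Icc 1 r,
        gaussFluxX r G P α (cellDx v) q.1 q.2.1 q.2.2.1 q.2.2.2 ^ 2 :=
      Finset.sum_le_sum_of_subset_of_nonneg (Finset.filter_subset _ _) fun _ _ _ => sq_nonneg _
    _ ≤ ∑ q ∈ Finset.Icc 1 P.m ×ˢ Finset.Icc 1 r ×ˢ Finset.Icc 1 P.n ×ˢ Finset.Icc 1 r,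
        4 * σ * M ^ 2 * (E q.1 q.2.2.1 + if q.2.2.1 = P.n then 0 else E q.1 (q.2.2.1 + 1)) :=
      Finset.sum_le_sum fun q hq => by
        simp only [Finset.mem_product] at hq
        exact sq_gaussFluxX_le hG hσ hP hα hbd hv hq.1 hq.2.1 hq.2.2.1 hq.2.2.2
    _ = r * r * (4 * σ * M ^ 2 * ∑ i ∈ Finset.Icc 1 P.m, ∑ j ∈ Finset.Icc 1 P.n,
        (E i j + if j = P.n then 0 else E i (j + 1))) := by
      refine (sum_prod_prod_prod_eq _ _ _ _ fun i j =>
        4 * σ * M ^ 2 * (E i j + if j = P.n then 0 else E i (j + 1))).trans ?_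
      simp [Finset.mul_sum]
    _ ≤ r * r * (4 * σ * M ^ 2 * (2 * ∑ i ∈ Finset.Icc 1 P.m, ∑ j ∈ Finset.Icc 1 P.n, E i j)) := by
      gcongr
      exact sum_sum_add_ite_succ_le (cellEnergy_nonneg v) _ _
    _ = _ := by rw [sq_semiP]; ring

lemma sum_sq_gaussFluxY_le (hG : IsGaussPoints r G) (hσ : 1 ≤ σ) (hP : P.QuasiUniform σ)
    (hα : Measurable α) (hbd : ∀ z ∈ P.dom, |α z| ≤ M) (hv : CellSmooth P 2 v) :
    ∑ q ∈ idxY r P, gaussFluxY r G P α (cellDy v) q.1 q.2.1 q.2.2.1 q.2.2.2 ^ 2 ≤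
      8 * σ * r ^ 2 * M ^ 2 * semiP P v ^ 2 := by
  set E := cellEnergy P v
  calc _ ≤ ∑ q ∈ Finset.Icc 1 P.m ×ˢ Finset.Icc 1 r ×ˢ Finset.Icc 1 P.n ×ˢ Finset.Icc 1 r,
        gaussFluxY r G P α (cellDy v) q.1 q.2.1 q.2.2.1 q.2.2.2 ^ 2 :=
      Finset.sum_le_sum_of_subset_of_nonneg (Finset.filter_subset _ _) fun _ _ _ => sq_nonneg _
    _ ≤ ∑ q ∈ Finset.Icc 1 P.m ×ˢ Finset.Icc 1 r ×ˢ Finset.Icc 1 P.n ×ˢ Finset.Icc 1 r,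
        4 * σ * M ^ 2 * (E q.1 q.2.2.1 + if q.1 = P.m then 0 else E (q.1 + 1) q.2.2.1) :=
      Finset.sum_le_sum fun q hq => by
        simp only [Finset.mem_product] at hq
        exact sq_gaussFluxY_le hG hσ hP hα hbd hv hq.1 hq.2.1 hq.2.2.1 hq.2.2.2
    _ = r * r * (4 * σ * M ^ 2 * ∑ j ∈ Finset.Icc 1 P.n, ∑ i ∈ Finset.Icc 1 P.m,
        (E i j + if i = P.m then 0 else E (i + 1) j)) := by
      refine (sum_prod_prod_prod_eq _ _ _ _ fun i j =>
        4 * σ * M ^ 2 * (E i j + if i = P.m then 0 else E (i + 1) j)).trans ?_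
      rw [Finset.sum_comm]
      simp [Finset.mul_sum]
    _ ≤ r * r * (4 * σ * M ^ 2 * (2 * ∑ j ∈ Finset.Icc 1 P.n, ∑ i ∈ Finset.Icc 1 P.m, E i j)) := by
      gcongr
      exact sum_sum_add_ite_succ_le (E := fun j i => E i j) (fun j i => cellEnergy_nonneg v i j) _ _
    _ = _ := by rw [sq_semiP, Finset.sum_comm]; ring

end FluxSums

lemma abs_sum_mul_le_of_sum_sq_le {ι : Type*} (s : Finset ι) (f g : ι → ℝ) {A B : ℝ}
    (hf : ∑ i ∈ s, f i ^ 2 ≤ A ^ 2) (hg : ∑ i ∈ s, g i ^ 2 ≤ B ^ 2) (hA : 0 ≤ A) (hB : 0 ≤ B) :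
    |∑ i ∈ s, f i * g i| ≤ A * B := by
  refine abs_le_of_sq_le_sq ((Finset.sum_mul_sq_le_sq_mul_sq s f g).trans ?_) (mul_nonneg hA hB)
  rw [mul_pow]
  exact mul_le_mul hf hg (Finset.sum_nonneg fun _ _ => sq_nonneg _) (sq_nonneg A)

section DualSemi

variable {a b c d : ℝ} (r : ℕ) (P : RectPartition a b c d) (w : ℕ → ℕ → ℕ → ℕ → ℝ)

lemma sq_dualSemi :
    dualSemi r P w ^ 2 = (∑ q ∈ idxX r P, jumpX r w q.1 q.2.1 q.2.2.1 q.2.2.2 ^ 2) +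
      ∑ q ∈ idxY r P, jumpY r w q.1 q.2.1 q.2.2.1 q.2.2.2 ^ 2 :=
  Real.sq_sqrt (add_nonneg (Finset.sum_nonneg fun _ _ => sq_nonneg _)
    (Finset.sum_nonneg fun _ _ => sq_nonneg _))

lemma sum_sq_jumpX_le_sq_dualSemi :
    ∑ q ∈ idxX r P, jumpX r w q.1 q.2.1 q.2.2.1 q.2.2.2 ^ 2 ≤ dualSemi r P w ^ 2 :=
  (sq_dualSemi r P w).symm ▸ le_add_of_nonneg_right (Finset.sum_nonneg fun _ _ => sq_nonneg _)

lemma sum_sq_jumpY_le_sq_dualSemi :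
    ∑ q ∈ idxY r P, jumpY r w q.1 q.2.1 q.2.2.1 q.2.2.2 ^ 2 ≤ dualSemi r P w ^ 2 :=
  (sq_dualSemi r P w).symm ▸ le_add_of_nonneg_left (Finset.sum_nonneg fun _ _ => sq_nonneg _)

end DualSemi

/-- Continuity (boundedness) of the FVM bilinear form: there is `M₀ = M₀(r, σ) > 0`
such that for every `σ`-quasi-uniform partition, every bounded measurable `α`,
every `v` continuous on `Ω`, vanishing on `∂Ω` and `C²` on each closed cell, and
every test function `w`, `|a_P(v, w)| ≤ M₀ (sup|α|) |v|_P |w|_{P'}`. -/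
theorem fvm_continuity (r : ℕ) (hr : 1 ≤ r) (G : ℕ → ℝ) (hG : IsGaussPoints r G)
    (σ : ℝ) (hσ : 1 ≤ σ) :
    ∃ M₀ : ℝ, 0 < M₀ ∧
      ∀ (a b c d : ℝ), a < b → c < d →
      ∀ P : RectPartition a b c d, P.QuasiUniform σ →
      ∀ α : ℝ × ℝ → ℝ, Measurable α →
      ∀ αM : ℝ, (∀ z ∈ P.dom, |α z| ≤ αM) →
      ∀ v : PiecewiseFun P, ContinuousOn v.toFun P.dom →
        (∀ z ∈ P.bdry, v.toFun z = 0) → CellSmooth P 2 v →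
      ∀ w : ℕ → ℕ → ℕ → ℕ → ℝ, IsTestFun r P w →
        |aP r G P α (cellDx v) (cellDy v) w| ≤ M₀ * αM * semiP P v * dualSemi r P w := by
  refine ⟨6 * σ * r, by positivity, ?_⟩
  intro a b c d hab hcd P hP α hα αM hbd v _ _ hv w _
  have hαM : 0 ≤ αM := (abs_nonneg _).trans (hbd (a, c) ⟨⟨le_rfl, hab.le⟩, le_rfl, hcd.le⟩)
  have hsemi : 0 ≤ semiP P v := Real.sqrt_nonneg _
  have hK : 8 * σ * r ^ 2 * αM ^ 2 * semiP P v ^ 2 ≤ (3 * σ * r * αM * semiP P v) ^ 2 := by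
    have : 8 * σ ≤ 9 * σ ^ 2 := by nlinarith
    nlinarith [mul_le_mul_of_nonneg_right this (sq_nonneg (r * αM * semiP P v))]
  have hX := abs_sum_mul_le_of_sum_sq_le _ _ _ (sum_sq_jumpX_le_sq_dualSemi r P w)
    ((sum_sq_gaussFluxX_le hG hσ hP hα hbd hv).trans hK) (Real.sqrt_nonneg _) (by positivity)
  have hY := abs_sum_mul_le_of_sum_sq_le _ _ _ (sum_sq_jumpY_le_sq_dualSemi r P w)
    ((sum_sq_gaussFluxY_le hG hσ hP hα hbd hv).trans hK) (Real.sqrt_nonneg _) (by positivity)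
  rw [aP_eq]
  exact (abs_add_le _ _).trans (by linarith)
end
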